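/- arXiv:1102.3615 — 5 statements merged into one kernel-verified Lean document; each statement's English description precedes it below -/
import Mathlib

section
/- In a finite-state mean-payoff parity game where all states belong to Player 1 (V₂ = ∅), Player 1 has an optimal strategy: for every state q₀ there exists a strategy σ such that inf over plays consistent with σ from q₀ of the payoff equals the value sup_σ' inf of payoff, i.e. the supremum over strategies of the value is attained. -/
open Filter

/-- A (weighted) game graph with priorities: states are partitioned between
Player 1 (`isP1`) and Player 2, `E` is the edge relation, `w` the edge weights
and `col` the priority function. -/
structure Game (V : Type) where
  isP1 : V → Prop
  E : V → V → Prop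
  w : V → V → ℝ
  col : V → ℕ

variable {V : Type}

/-- An infinite play (infinite path in the graph). -/
def IsPlay (G : Game V) (ρ : ℕ → V) : Prop := ∀ n, G.E (ρ n) (ρ (n + 1))

/-- The set of states occurring infinitely often. -/
def InfOcc (ρ : ℕ → V) : Set V := {v | ∃ᶠ n in atTop, ρ n = v}

/-- The average weight of the first `n` edges of `ρ`. -/
noncomputable def avgW (G : Game V) (ρ : ℕ → V) (n : ℕ) : ℝ :=
  (∑ i ∈ Finset.range n, G.w (ρ i) (ρ (i + 1))) / n

/-- A play is parity-winning if the minimal priority seen infinitely often is even. -/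
def ParityWin (G : Game V) (ρ : ℕ → V) : Prop := Even (sInf (G.col '' InfOcc ρ))

/-- The payoff of a play: the liminf of the average weights if the play is
parity-winning, and `-∞` otherwise. -/
noncomputable def payoff (G : Game V) (ρ : ℕ → V) : EReal :=
  haveI := Classical.dec (ParityWin G ρ)
  if ParityWin G ρ then Filter.liminf (fun n => ((avgW G ρ n : ℝ) : EReal)) atTop else ⊥

/-- A strategy of Player 1: given the past history and the current state
(controlled by Player 1), choose a successor. -/
structure Strat1 (G : Game V) where
  f : List V → V → V
  valid : ∀ h c, G.isP1 c → G.E c (f h c)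

/-- A strategy of Player 2. -/
structure Strat2 (G : Game V) where
  f : List V → V → V
  valid : ∀ h c, ¬ G.isP1 c → G.E c (f h c)

def Memoryless1 {G : Game V} (σ : Strat1 G) : Prop := ∀ h h' c, σ.f h c = σ.f h' c
def Memoryless2 {G : Game V} (τ : Strat2 G) : Prop := ∀ h h' c, τ.f h c = τ.f h' c

/-- A play is consistent with a strategy of Player 1. -/
def Consistent1 (G : Game V) (σ : Strat1 G) (ρ : ℕ → V) : Prop :=
  ∀ n, G.isP1 (ρ n) → ρ (n + 1) = σ.f (List.ofFn fun i : Fin n => ρ i) (ρ n)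

/-- A play is consistent with a strategy of Player 2. -/
def Consistent2 (G : Game V) (τ : Strat2 G) (ρ : ℕ → V) : Prop :=
  ∀ n, ¬ G.isP1 (ρ n) → ρ (n + 1) = τ.f (List.ofFn fun i : Fin n => ρ i) (ρ n)

/-- The value of a Player 1 strategy from `q₀`: the infimum of the payoffs of
consistent plays from `q₀`. -/
noncomputable def val1 (G : Game V) (σ : Strat1 G) (q₀ : V) : EReal :=
  ⨅ ρ : {ρ : ℕ → V // IsPlay G ρ ∧ ρ 0 = q₀ ∧ Consistent1 G σ ρ}, payoff G ρ.val

/-- The value of a Player 2 strategy from `q₀`. -/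
noncomputable def val2 (G : Game V) (τ : Strat2 G) (q₀ : V) : EReal :=
  ⨆ ρ : {ρ : ℕ → V // IsPlay G ρ ∧ ρ 0 = q₀ ∧ Consistent2 G τ ρ}, payoff G ρ.val

/-- The lower value of a state. -/
noncomputable def lowVal (G : Game V) (q₀ : V) : EReal := ⨆ σ : Strat1 G, val1 G σ q₀

/-- The upper value of a state. -/
noncomputable def upVal (G : Game V) (q₀ : V) : EReal := ⨅ τ : Strat2 G, val2 G τ q₀

/-- The Player 1 attractor of a set `S`: the states from which Player 1 can
force a visit to `S`. -/
inductive Attr1 (G : Game V) (S : Set V) : V → Prop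
  | base {v} : v ∈ S → Attr1 G S v
  | p1 {v u} : G.isP1 v → G.E v u → Attr1 G S u → Attr1 G S v
  | p2 {v} : ¬ G.isP1 v → (∃ u, G.E v u) → (∀ u, G.E v u → Attr1 G S u) → Attr1 G S v

/-- The Player 2 attractor of a set `S`. -/
inductive Attr2 (G : Game V) (S : Set V) : V → Prop
  | base {v} : v ∈ S → Attr2 G S v
  | p2 {v u} : ¬ G.isP1 v → G.E v u → Attr2 G S u → Attr2 G S v
  | p1 {v} : G.isP1 v → (∃ u, G.E v u) → (∀ u, G.E v u → Attr2 G S u) → Attr2 G S v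

/-- The game restricted to a subarena `T`. -/
def Game.restrict (G : Game V) (T : Set V) : Game T where
  isP1 v := G.isP1 v.val
  E a b := G.E a.val b.val
  w a b := G.w a.val b.val
  col v := G.col v.val

/-!
With a single player, every strategy produces exactly one play from `q₀` and every play is
produced by some strategy, so it suffices to find an optimal play. The parity condition only
depends on the set `I` of states visited infinitely often, and there are finitely many such sets,
so it suffices to find, for each `I`, a play that dominates every other play with recurrent set `I`.

Let `m` be the largest mean weight of a closed walk of length at most `|V|` inside `I`. Cutting such
short cycles out of a walk in `I` until at most `|V|` steps remain shows that every play that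
ends up in `I` has mean payoff at most `m`. Conversely, loop on a cycle of mean `m`, and only in
the blocks whose index is a perfect square take a detour through all of `I`: the detours occupy a
vanishing fraction of the time, so this play has recurrent set `I` and mean payoff at least `m`.
-/

open Finset Topology

theorem exists_lt_le_card_eq [Fintype V] (f : ℕ → V) :
    ∃ i j, i < j ∧ j ≤ Fintype.card V ∧ f i = f j := by
  obtain ⟨x, y, hxy, he⟩ :=
    Fintype.exists_ne_map_eq_of_card_lt (fun i : Fin (Fintype.card V + 1) => f i) (by simp)
  rcases lt_or_gt_of_ne (Fin.val_ne_of_ne hxy) with h | h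
  · exact ⟨x, y, h, Nat.lt_succ_iff.1 y.2, he⟩
  · exact ⟨y, x, h, Nat.lt_succ_iff.1 x.2, he.symm⟩

theorem card_filter_isSquare_div_le {K : ℕ} (hK : 0 < K) (n : ℕ) :
    #{j ∈ range n | IsSquare (j / K)} ≤ K * (Nat.sqrt n + 1) := by
  calc #{j ∈ range n | IsSquare (j / K)}
      ≤ #((range (Nat.sqrt n + 1) ×ˢ range K).image fun p => K * (p.1 * p.1) + p.2) := by
        refine card_le_card fun j hj => ?_
        simp only [mem_filter, mem_range] at hj
        obtain ⟨hjn, r, hr⟩ := hj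
        have hrr : r * r ≤ n := by
          rw [← hr]
          exact (Nat.div_le_self j K).trans hjn.le
        refine mem_image.2 ⟨(r, j % K), ?_, ?_⟩
        · simp only [mem_product, mem_range]
          exact ⟨Nat.lt_succ_of_le (Nat.le_sqrt.2 hrr), Nat.mod_lt j hK⟩
        · rw [← hr, Nat.div_add_mod]
    _ ≤ #(range (Nat.sqrt n + 1) ×ˢ range K) := card_image_le
    _ = K * (Nat.sqrt n + 1) := by simp [mul_comm]

theorem tendsto_add_mul_sqrt_div (A B : ℝ) :
    Tendsto (fun n : ℕ => (A + B * Nat.sqrt n) / n) atTop (𝓝 0) := by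
  have hsqrt : Tendsto (fun n : ℕ => (Nat.sqrt n : ℝ) / n) atTop (𝓝 0) := by
    refine tendsto_of_tendsto_of_tendsto_of_le_of_le tendsto_const_nhds
      (tendsto_inv_atTop_zero.comp (Real.tendsto_sqrt_atTop.comp tendsto_natCast_atTop_atTop))
      (fun n => by positivity) fun n => ?_
    simp only [Function.comp_apply, ← Real.sqrt_div_self]
    exact div_le_div_of_nonneg_right Real.nat_sqrt_le_real_sqrt (Nat.cast_nonneg n)
  simpa [add_div, mul_div_assoc] using
    (tendsto_const_div_atTop_nhds_zero_nat A).add (hsqrt.const_mul B)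

theorem eventually_mem_infOcc [Finite V] (ρ : ℕ → V) : ∀ᶠ n in atTop, ρ n ∈ InfOcc ρ := by
  have h : ∀ v, ∀ᶠ n in atTop, ρ n = v → v ∈ InfOcc ρ := fun v => by
    by_cases hv : v ∈ InfOcc ρ
    · exact .of_forall fun _ _ => hv
    · exact (not_frequently.1 hv).mono fun _ hn h => (hn h).elim
  exact (eventually_all.2 h).mono fun n hn => hn _ rfl

theorem infOcc_subset_of_eventually {I : Set V} {ρ : ℕ → V} (h : ∀ᶠ n in atTop, ρ n ∈ I) :
    InfOcc ρ ⊆ I := fun _ hv => by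
  obtain ⟨n, rfl, hn⟩ := (Frequently.and_eventually hv h).exists
  exact hn

namespace Game

variable {G : Game V}

def wSum (G : Game V) (f : ℕ → V) (n : ℕ) : ℝ := ∑ i ∈ range n, G.w (f i) (f (i + 1))

theorem exists_abs_w_le [Finite V] (G : Game V) : ∃ W, 0 ≤ W ∧ ∀ u v, |G.w u v| ≤ W := by
  obtain ⟨W, hW⟩ := (Set.finite_range fun p : V × V => |G.w p.1 p.2|).bddAbove
  exact ⟨max W 0, le_max_right _ _, fun u v => (hW ⟨(u, v), rfl⟩).trans (le_max_left _ _)⟩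

theorem abs_wSum_le {W : ℝ} (hW : ∀ u v, |G.w u v| ≤ W) (f : ℕ → V) (n : ℕ) :
    |G.wSum f n| ≤ W * n :=
  calc |G.wSum f n| ≤ ∑ i ∈ range n, |G.w (f i) (f (i + 1))| := abs_sum_le_sum_abs _ _
    _ ≤ ∑ _i ∈ range n, W := sum_le_sum fun i _ => hW _ _
    _ = W * n := by rw [sum_const, card_range, nsmul_eq_mul, mul_comm]

theorem wSum_add (f : ℕ → V) (a b : ℕ) :
    G.wSum f (a + b) = G.wSum f a + G.wSum (fun t => f (a + t)) b := by
  simp only [wSum, sum_range_add, add_assoc]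

theorem wSum_congr {f g : ℕ → V} {n : ℕ} (h : ∀ i ≤ n, f i = g i) : G.wSum f n = G.wSum g n :=
  sum_congr rfl fun i hi => by
    rw [mem_range] at hi
    rw [h i hi.le, h (i + 1) hi]

theorem avgW_eq_wSum_div (ρ : ℕ → V) (n : ℕ) : avgW G ρ n = G.wSum ρ n / n := rfl

def IsWalkIn (G : Game V) (I : Set V) (f : ℕ → V) (n : ℕ) : Prop :=
  ∀ i < n, f i ∈ I ∧ G.E (f i) (f (i + 1))

theorem isWalkIn_of_isPlay {I : Set V} {ρ : ℕ → V} (hρ : IsPlay G ρ) {N : ℕ}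
    (hI : ∀ n ≥ N, ρ n ∈ I) (n : ℕ) : G.IsWalkIn I (fun t => ρ (N + t)) n :=
  fun t _ => ⟨hI _ (Nat.le_add_right N t), hρ (N + t)⟩

theorem IsWalkIn.shift {I : Set V} {f : ℕ → V} {n i d : ℕ} (hf : G.IsWalkIn I f n)
    (hd : i + d ≤ n) : G.IsWalkIn I (fun t => f (i + t)) d :=
  fun t ht => by simpa only [add_assoc] using hf (i + t) (by omega)

def shortCycleMeans [Fintype V] (G : Game V) (I : Set V) : Set ℝ :=
  {x | ∃ f n, 0 < n ∧ n ≤ Fintype.card V ∧ G.IsWalkIn I f n ∧ f n = f 0 ∧ x = G.wSum f n / n}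

theorem shortCycleMeans_finite [Fintype V] (G : Game V) (I : Set V) :
    (G.shortCycleMeans I).Finite := by
  set N := Fintype.card V
  refine (Set.finite_range fun p : (Fin (N + 1) → V) × Fin (N + 1) =>
    G.wSum (fun t => p.1 ⟨min t N, by omega⟩) p.2 / p.2).subset ?_
  rintro x ⟨f, n, -, hn, -, -, rfl⟩
  refine ⟨(fun t => f t, ⟨n, by omega⟩), ?_⟩
  dsimp only
  rw [wSum_congr fun i hi => by rw [min_eq_left (hi.trans hn)]]

theorem shortCycleMeans_nonempty [Fintype V] {I : Set V} {ρ : ℕ → V} (hρ : IsPlay G ρ) {N : ℕ}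
    (hI : ∀ n ≥ N, ρ n ∈ I) : (G.shortCycleMeans I).Nonempty := by
  obtain ⟨i, j, hij, hj, h⟩ := exists_lt_le_card_eq fun t => ρ (N + t)
  refine ⟨_, fun t => ρ (N + (i + t)), j - i, by omega, by omega,
    (isWalkIn_of_isPlay hρ hI j).shift (by omega), ?_, rfl⟩
  simp only [add_zero, Nat.add_sub_cancel' hij.le, h]

def excise (f : ℕ → V) (i d : ℕ) (t : ℕ) : V := if t < i then f t else f (t + d)

section Excise

variable {f : ℕ → V} {i d : ℕ}

theorem excise_of_le (h : f i = f (i + d)) {t : ℕ} (ht : t ≤ i) : excise f i d t = f t := by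
  rcases ht.lt_or_eq with ht | rfl
  · exact if_pos ht
  · rw [excise, if_neg (lt_irrefl t), h]

theorem excise_add (s : ℕ) : excise f i d (i + s) = f (i + d + s) := by
  rw [excise, if_neg (by omega), add_right_comm]

theorem wSum_excise (h : f i = f (i + d)) {n : ℕ} (hn : i + d ≤ n) :
    G.wSum f n = G.wSum (excise f i d) (n - d) + G.wSum (fun t => f (i + t)) d := by
  obtain ⟨r, rfl⟩ := Nat.exists_eq_add_of_le hn
  rw [show i + d + r - d = i + r by omega, wSum_add, wSum_add, wSum_add (excise f i d),
    wSum_congr fun t ht => excise_of_le h ht, funext (excise_add (f := f) (i := i) (d := d))]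
  ring

theorem IsWalkIn.excise {I : Set V} {n : ℕ} (hf : G.IsWalkIn I f n) (h : f i = f (i + d))
    (hn : i + d ≤ n) : G.IsWalkIn I (excise f i d) (n - d) := by
  intro t ht
  rcases lt_or_ge t i with hti | hti
  · rw [excise_of_le h hti.le, excise_of_le h hti]
    exact hf t (by omega)
  · obtain ⟨s, rfl⟩ := Nat.exists_eq_add_of_le hti
    rw [excise_add, show i + s + 1 = i + (s + 1) by ring, excise_add]
    simpa only [add_assoc] using hf (i + d + s) (by omega)

end Excise

theorem wSum_le_of_isWalkIn [Fintype V] {I : Set V} {m W : ℝ} (hW0 : 0 ≤ W)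
    (hW : ∀ u v, |G.w u v| ≤ W) (hm : ∀ x ∈ G.shortCycleMeans I, x ≤ m) :
    ∀ n f, G.IsWalkIn I f n → G.wSum f n ≤ m * n + (W + |m|) * Fintype.card V := by
  intro n
  induction n using Nat.strong_induction_on with
  | _ n ih =>
  intro f hf
  by_cases hn : n ≤ Fintype.card V
  · have hle := (abs_le.1 (abs_wSum_le hW f n)).2
    have hcard : (W + |m|) * n ≤ (W + |m|) * Fintype.card V :=
      mul_le_mul_of_nonneg_left (by exact_mod_cast hn) (by positivity)
    nlinarith [neg_abs_le m, (Nat.cast_nonneg n : (0 : ℝ) ≤ n)]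
  · obtain ⟨i, j, hij, hj, hfij⟩ := exists_lt_le_card_eq f
    obtain ⟨d, rfl⟩ := Nat.exists_eq_add_of_le hij.le
    have hcycle : G.wSum (fun t => f (i + t)) d ≤ m * d := by
      have hd : (0 : ℝ) < d := by exact_mod_cast (by omega : 0 < d)
      have := hm _ ⟨_, d, by omega, by omega, hf.shift (i := i) (by omega),
        by simpa using hfij.symm, rfl⟩
      rwa [div_le_iff₀ hd] at this
    have hrest := ih (n - d) (by omega) _ (hf.excise hfij (by omega))
    rw [Nat.cast_sub (by omega)] at hrest
    rw [wSum_excise hfij (by omega)]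
    linarith

noncomputable def meanPayoff (G : Game V) (ρ : ℕ → V) : EReal :=
  liminf (fun n => (avgW G ρ n : EReal)) atTop

theorem payoff_le_payoff_of_infOcc_eq {ρ ρ' : ℕ → V} (h : InfOcc ρ' = InfOcc ρ)
    (hmp : G.meanPayoff ρ' ≤ G.meanPayoff ρ) : payoff G ρ' ≤ payoff G ρ := by
  have hwin : ParityWin G ρ' ↔ ParityWin G ρ := by rw [ParityWin, ParityWin, h]
  unfold payoff
  by_cases hρ : ParityWin G ρ
  · rw [if_pos (hwin.2 hρ), if_pos hρ]
    exact hmp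
  · rw [if_neg (mt hwin.1 hρ)]
    exact bot_le

theorem meanPayoff_le_of_wSum_le {ρ : ℕ → V} {m : ℝ} {D : ℕ → ℝ}
    (hD : Tendsto (fun n => D n / n) atTop (𝓝 0)) (h : ∀ᶠ n in atTop, G.wSum ρ n ≤ m * n + D n) :
    G.meanPayoff ρ ≤ m := by
  have hlim : Tendsto (fun n : ℕ => m + D n / n) atTop (𝓝 m) := by
    simpa using tendsto_const_nhds.add hD
  calc G.meanPayoff ρ ≤ liminf (fun n : ℕ => ((m + D n / n : ℝ) : EReal)) atTop := by
        refine liminf_le_liminf ?_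
        filter_upwards [h, eventually_gt_atTop 0] with n hn hpos
        have hpos : (0 : ℝ) < n := by exact_mod_cast hpos
        rw [EReal.coe_le_coe_iff, avgW_eq_wSum_div, div_le_iff₀ hpos, add_mul,
          div_mul_cancel₀ _ hpos.ne']
        linarith
    _ = m := (EReal.tendsto_coe.2 hlim).liminf_eq

theorem le_meanPayoff_of_le_wSum {ρ : ℕ → V} {m : ℝ} {D : ℕ → ℝ}
    (hD : Tendsto (fun n => D n / n) atTop (𝓝 0)) (h : ∀ᶠ n in atTop, m * n - D n ≤ G.wSum ρ n) :
    (m : EReal) ≤ G.meanPayoff ρ := by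
  have hlim : Tendsto (fun n : ℕ => m - D n / n) atTop (𝓝 m) := by
    simpa using tendsto_const_nhds.sub hD
  calc (m : EReal) = liminf (fun n : ℕ => ((m - D n / n : ℝ) : EReal)) atTop :=
        (EReal.tendsto_coe.2 hlim).liminf_eq.symm
    _ ≤ G.meanPayoff ρ := by
        refine liminf_le_liminf ?_
        filter_upwards [h, eventually_gt_atTop 0] with n hn hpos
        have hpos : (0 : ℝ) < n := by exact_mod_cast hpos
        rw [EReal.coe_le_coe_iff, avgW_eq_wSum_div, le_div_iff₀ hpos, sub_mul,
          div_mul_cancel₀ _ hpos.ne']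
        linarith

theorem meanPayoff_le_of_eventually_mem [Fintype V] {I : Set V} {ρ : ℕ → V} {m : ℝ}
    (hm : ∀ x ∈ G.shortCycleMeans I, x ≤ m) (hρ : IsPlay G ρ) (hI : ∀ᶠ n in atTop, ρ n ∈ I) :
    G.meanPayoff ρ ≤ m := by
  obtain ⟨W, hW0, hW⟩ := G.exists_abs_w_le
  obtain ⟨N, hN⟩ := eventually_atTop.1 hI
  refine meanPayoff_le_of_wSum_le (D := fun _ => (W + |m|) * (N + Fintype.card V))
    (tendsto_const_div_atTop_nhds_zero_nat _) ?_
  filter_upwards [eventually_ge_atTop N] with n hn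
  obtain ⟨r, rfl⟩ := Nat.exists_eq_add_of_le hn
  have hprefix := (abs_le.1 (abs_wSum_le hW ρ N)).2
  have htail := wSum_le_of_isWalkIn hW0 hW hm r _ (isWalkIn_of_isPlay hρ hN r)
  have hm' : m * N + |m| * N ≥ 0 := by nlinarith [neg_abs_le m, (Nat.cast_nonneg N : (0 : ℝ) ≤ N)]
  rw [wSum_add]
  push_cast
  linarith

def loop (c : ℕ → V) (k : ℕ) (j : ℕ) : V := c (j % k)

section Loop

variable {c : ℕ → V} {k : ℕ}

theorem loop_of_dvd {j : ℕ} (h : k ∣ j) : loop c k j = c 0 := by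
  rw [loop, Nat.mod_eq_zero_of_dvd h]

theorem loop_succ (hk : 0 < k) (hck : c k = c 0) (j : ℕ) : loop c k (j + 1) = c (j % k + 1) := by
  have hj : j + 1 = (j % k + 1) + k * (j / k) := by rw [add_right_comm, Nat.mod_add_div]
  rw [loop, hj, Nat.add_mul_mod_self_left]
  rcases Nat.lt_or_eq_of_le (Nat.mod_lt j hk) with h | h
  · rw [Nat.mod_eq_of_lt h]
  · rw [show j % k + 1 = k from h, Nat.mod_self, hck]

theorem isPlay_loop (hk : 0 < k) (hc : ∀ i < k, G.E (c i) (c (i + 1))) (hck : c k = c 0) :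
    IsPlay G (loop c k) := fun j => by
  rw [loop_succ hk hck]
  exact hc _ (Nat.mod_lt j hk)

theorem wSum_loop (hk : 0 < k) (hck : c k = c 0) (n : ℕ) :
    G.wSum (loop c k) n = (n / k : ℕ) * G.wSum c k + G.wSum c (n % k) := by
  induction n using Nat.strong_induction_on with
  | _ n ih =>
  have hshort : ∀ n ≤ k, G.wSum (loop c k) n = G.wSum c n := fun n hn =>
    sum_congr rfl fun j hj => by
      rw [mem_range] at hj
      rw [loop_succ hk hck, loop, Nat.mod_eq_of_lt (by omega)]
  rcases lt_or_ge n k with hn | hn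
  · rw [Nat.div_eq_of_lt hn, Nat.mod_eq_of_lt hn, hshort n hn.le]
    simp
  · obtain ⟨r, rfl⟩ := Nat.exists_eq_add_of_le hn
    have hshift : (fun t => loop c k (k + t)) = loop c k := funext fun t => by
      rw [loop, loop, Nat.add_mod_left]
    rw [wSum_add, hshift, ih r (by omega), hshort k le_rfl, Nat.add_div_left _ hk,
      Nat.add_mod_left]
    push_cast
    ring

theorem le_wSum_loop {W : ℝ} (hW : ∀ u v, |G.w u v| ≤ W) (hk : 0 < k) (hck : c k = c 0)
    (n : ℕ) : G.wSum c k / k * n - (W + |G.wSum c k / k|) * k ≤ G.wSum (loop c k) n := by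
  set m := G.wSum c k / k
  have hk' : (0 : ℝ) < k := by exact_mod_cast hk
  have hmk : G.wSum c k = m * k := (div_mul_cancel₀ _ hk'.ne').symm
  have hW0 : 0 ≤ W := (abs_nonneg _).trans (hW (c 0) (c 0))
  have hn : (n : ℝ) = k * (n / k : ℕ) + (n % k : ℕ) := by exact_mod_cast (Nat.div_add_mod n k).symm
  have hmod : ((n % k : ℕ) : ℝ) ≤ k := by exact_mod_cast (Nat.mod_lt n hk).le
  have hrem := (abs_le.1 (abs_wSum_le hW c (n % k))).1
  have habs : m * (n % k : ℕ) ≤ |m| * k := by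
    nlinarith [le_abs_self m, abs_nonneg m, (Nat.cast_nonneg (n % k) : (0 : ℝ) ≤ (n % k : ℕ))]
  have hWk := mul_le_mul_of_nonneg_left hmod hW0
  rw [wSum_loop hk hck, hmk, hn]
  linarith

end Loop

def blockSwitch (K : ℕ) (P : ℕ → Prop) [DecidablePred P] (ρ₁ ρ₂ : ℕ → V) (j : ℕ) : V :=
  if P (j / K) then ρ₁ j else ρ₂ j

section BlockSwitch

variable {K : ℕ} {P : ℕ → Prop} [DecidablePred P] {ρ₁ ρ₂ : ℕ → V}

theorem blockSwitch_succ (hagree : ∀ j, K ∣ j → ρ₁ j = ρ₂ j) (j : ℕ) :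
    blockSwitch K P ρ₁ ρ₂ (j + 1) = if P (j / K) then ρ₁ (j + 1) else ρ₂ (j + 1) := by
  by_cases hd : K ∣ j + 1
  · simp only [blockSwitch, hagree _ hd, ite_self]
  · rw [blockSwitch, Nat.succ_div_of_not_dvd hd]

theorem isPlay_blockSwitch (h₁ : IsPlay G ρ₁) (h₂ : IsPlay G ρ₂)
    (hagree : ∀ j, K ∣ j → ρ₁ j = ρ₂ j) : IsPlay G (blockSwitch K P ρ₁ ρ₂) := fun j => by
  rw [blockSwitch_succ hagree, blockSwitch]
  split_ifs
  exacts [h₁ j, h₂ j]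

theorem wSum_sub_le_wSum_blockSwitch {W : ℝ} (hW : ∀ u v, |G.w u v| ≤ W)
    (hagree : ∀ j, K ∣ j → ρ₁ j = ρ₂ j) (n : ℕ) :
    G.wSum ρ₂ n - 2 * W * #{j ∈ range n | P (j / K)} ≤ G.wSum (blockSwitch K P ρ₁ ρ₂) n := by
  rw [← sum_boole, mul_sum, wSum, wSum, ← sum_sub_distrib]
  refine sum_le_sum fun j _ => ?_
  rw [blockSwitch_succ hagree, blockSwitch]
  split_ifs
  · linarith [abs_le.1 (hW (ρ₁ j) (ρ₁ (j + 1))), abs_le.1 (hW (ρ₂ j) (ρ₂ (j + 1)))]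
  · simp

end BlockSwitch

def glue (ρ : ℕ → V) (p : ℕ) (σ : ℕ → V) (i : ℕ) : V := if i < p then ρ i else σ (i - p)

section Glue

variable {ρ σ : ℕ → V} {p : ℕ}

theorem glue_of_le (h : σ 0 = ρ p) {i : ℕ} (hi : i ≤ p) : glue ρ p σ i = ρ i := by
  rcases hi.lt_or_eq with hi | rfl
  · exact if_pos hi
  · rw [glue, if_neg (lt_irrefl i), Nat.sub_self, h]

theorem glue_add (j : ℕ) : glue ρ p σ (p + j) = σ j := by
  rw [glue, if_neg (by omega), Nat.add_sub_cancel_left]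

theorem isPlay_glue (hρ : IsPlay G ρ) (hσ : IsPlay G σ) (h : σ 0 = ρ p) :
    IsPlay G (glue ρ p σ) := fun i => by
  rcases lt_or_ge i p with hi | hi
  · rw [glue_of_le h hi.le, glue_of_le h hi]
    exact hρ i
  · obtain ⟨j, rfl⟩ := Nat.exists_eq_add_of_le hi
    rw [glue_add, add_assoc, glue_add]
    exact hσ j

theorem wSum_glue (h : σ 0 = ρ p) (j : ℕ) :
    G.wSum (glue ρ p σ) (p + j) = G.wSum ρ p + G.wSum σ j := by
  rw [wSum_add, wSum_congr fun i hi => glue_of_le h hi, funext glue_add]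

end Glue

theorem exists_segment_covering_infOcc [Finite V] (ρ : ℕ → V) {a : V} (ha : a ∈ InfOcc ρ) :
    ∃ p L, 0 < L ∧ ρ p = a ∧ ρ (p + L) = a ∧ (∀ i ≥ p, ρ i ∈ InfOcc ρ) ∧
      ∀ v ∈ InfOcc ρ, ∃ t < L, ρ (p + t) = v := by
  obtain ⟨N, hN⟩ := eventually_atTop.1 (eventually_mem_infOcc ρ)
  obtain ⟨p, hp, hpa⟩ := frequently_atTop.1 ha N
  have hvisit : ∀ v, ∃ t, v ∈ InfOcc ρ → p ≤ t ∧ ρ t = v := fun v => by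
    by_cases hv : v ∈ InfOcc ρ
    · obtain ⟨t, ht, hρt⟩ := frequently_atTop.1 hv p
      exact ⟨t, fun _ => ⟨ht, hρt⟩⟩
    · exact ⟨0, fun h => (hv h).elim⟩
  choose t ht using hvisit
  have : Nonempty V := ⟨a⟩
  obtain ⟨v₀, hv₀⟩ := Finite.exists_max t
  obtain ⟨r, hr, hra⟩ := frequently_atTop.1 ha (t v₀ + 1)
  have hpr : p < r := by linarith [(ht a ha).1, hv₀ a]
  refine ⟨p, r - p, by omega, hpa, by rwa [Nat.add_sub_cancel' hpr.le], fun i hi => hN i (by omega),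
    fun v hv => ⟨t v - p, by have := (ht v hv).1; have := hv₀ v; omega, ?_⟩⟩
  rw [Nat.add_sub_cancel' (ht v hv).1, (ht v hv).2]

/-- Blocks have length `k * L` so that both loops are back at `c 0 = ρ₀ p` at every block
boundary. -/
def detourPlay (ρ₀ : ℕ → V) (p L : ℕ) (c : ℕ → V) (k : ℕ) : ℕ → V :=
  glue ρ₀ p (blockSwitch (k * L) IsSquare (loop (fun t => ρ₀ (p + t)) L) (loop c k))

section Detour

variable {ρ₀ c : ℕ → V} {p L k : ℕ}

theorem blockSwitch_detour_zero :
    blockSwitch (k * L) IsSquare (loop (fun t => ρ₀ (p + t)) L) (loop c k) 0 = ρ₀ p := by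
  simp [blockSwitch, loop]

theorem loop_detour_eq_loop (hpc : ρ₀ p = c 0) {j : ℕ} (hj : k * L ∣ j) :
    loop (fun t => ρ₀ (p + t)) L j = loop c k j := by
  rw [loop_of_dvd (dvd_of_mul_left_dvd hj), loop_of_dvd (dvd_of_mul_right_dvd hj), add_zero, hpc]

theorem detourPlay_zero : detourPlay ρ₀ p L c k 0 = ρ₀ 0 :=
  glue_of_le blockSwitch_detour_zero (Nat.zero_le p)

theorem isPlay_detourPlay (hρ₀ : IsPlay G ρ₀) (hL : 0 < L) (hpL : ρ₀ (p + L) = ρ₀ p) (hk : 0 < k)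
    (hc : ∀ i < k, G.E (c i) (c (i + 1))) (hck : c k = c 0) (hpc : ρ₀ p = c 0) :
    IsPlay G (detourPlay ρ₀ p L c k) :=
  isPlay_glue hρ₀ (isPlay_blockSwitch (isPlay_loop hL (fun i _ => hρ₀ (p + i)) (by simpa using hpL))
    (isPlay_loop hk hc hck) fun _ => loop_detour_eq_loop hpc) blockSwitch_detour_zero

theorem infOcc_detourPlay_subset {I : Set V} (hρ₀ : ∀ i ≥ p, ρ₀ i ∈ I) (hk : 0 < k)
    (hc : ∀ i < k, c i ∈ I) : InfOcc (detourPlay ρ₀ p L c k) ⊆ I := by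
  refine infOcc_subset_of_eventually ?_
  filter_upwards [eventually_ge_atTop p] with i hi
  obtain ⟨j, rfl⟩ := Nat.exists_eq_add_of_le hi
  rw [detourPlay, glue_add, blockSwitch, loop, loop]
  split_ifs
  exacts [hρ₀ _ (Nat.le_add_right _ _), hc _ (Nat.mod_lt j hk)]

theorem mem_infOcc_detourPlay (hk : 0 < k) {t : ℕ} (ht : t < L) :
    ρ₀ (p + t) ∈ InfOcc (detourPlay ρ₀ p L c k) := by
  have hL : 0 < L := by omega
  refine frequently_atTop.2 fun M => ⟨p + (k * L * (M * M) + t), ?_, ?_⟩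
  · calc M ≤ M * M := Nat.le_mul_self M
      _ ≤ k * L * (M * M) := Nat.le_mul_of_pos_left _ (Nat.mul_pos hk hL)
      _ ≤ p + (k * L * (M * M) + t) := by omega
  · have hsq : (k * L * (M * M) + t) / (k * L) = M * M := by
      rw [Nat.mul_add_div (by positivity), Nat.div_eq_of_lt (by nlinarith), add_zero]
    rw [detourPlay, glue_add, blockSwitch, hsq, if_pos (IsSquare.mul_self M), loop,
      mul_comm k L, mul_assoc, Nat.mul_add_mod, Nat.mod_eq_of_lt ht]

theorem le_meanPayoff_detourPlay [Finite V] (hL : 0 < L) (hk : 0 < k) (hck : c k = c 0)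
    (hpc : ρ₀ p = c 0) : ((G.wSum c k / k : ℝ) : EReal) ≤ G.meanPayoff (detourPlay ρ₀ p L c k) := by
  set m := G.wSum c k / k
  obtain ⟨W, hW0, hW⟩ := G.exists_abs_w_le
  refine le_meanPayoff_of_le_wSum (tendsto_add_mul_sqrt_div
    ((W + |m|) * (p + k) + 2 * W * (k * L)) (2 * W * (k * L))) ?_
  filter_upwards [eventually_ge_atTop p] with n hn
  obtain ⟨j, rfl⟩ := Nat.exists_eq_add_of_le hn
  have hprefix := (abs_le.1 (abs_wSum_le hW ρ₀ p)).1
  have hloop := le_wSum_loop hW hk hck j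
  have hswitch := wSum_sub_le_wSum_blockSwitch (K := k * L) (P := IsSquare) hW
    (fun _ => loop_detour_eq_loop (L := L) hpc) j
  have hcount : (#{i ∈ range j | IsSquare (i / (k * L))} : ℝ) ≤
      k * L * (Nat.sqrt (p + j) + 1) := by
    exact_mod_cast (card_filter_isSquare_div_le (Nat.mul_pos hk hL) j).trans
      (Nat.mul_le_mul_left _ (Nat.succ_le_succ (Nat.sqrt_le_sqrt (Nat.le_add_left j p))))
  have hcount' := mul_le_mul_of_nonneg_left hcount (by positivity : (0 : ℝ) ≤ 2 * W)
  have hmp : m * p ≤ |m| * p := mul_le_mul_of_nonneg_right (le_abs_self m) (Nat.cast_nonneg p)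
  rw [detourPlay, wSum_glue blockSwitch_detour_zero]
  push_cast
  linarith

end Detour

theorem exists_play_infOcc_eq_le_meanPayoff [Finite V] {ρ₀ c : ℕ → V} {k : ℕ}
    (hρ₀ : IsPlay G ρ₀) (hk : 0 < k) (hc : G.IsWalkIn (InfOcc ρ₀) c k) (hck : c k = c 0) :
    ∃ ρ, IsPlay G ρ ∧ ρ 0 = ρ₀ 0 ∧ InfOcc ρ = InfOcc ρ₀ ∧
      ((G.wSum c k / k : ℝ) : EReal) ≤ G.meanPayoff ρ := by
  obtain ⟨p, L, hL, hpc, hpL, hmem, hcover⟩ := exists_segment_covering_infOcc ρ₀ (hc 0 hk).1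
  refine ⟨detourPlay ρ₀ p L c k,
    isPlay_detourPlay hρ₀ hL (hpL.trans hpc.symm) hk (fun i hi => (hc i hi).2) hck hpc,
    detourPlay_zero, ?_, le_meanPayoff_detourPlay hL hk hck hpc⟩
  refine subset_antisymm (infOcc_detourPlay_subset hmem hk fun i hi => (hc i hi).1) fun v hv => ?_
  obtain ⟨t, ht, rfl⟩ := hcover v hv
  exact mem_infOcc_detourPlay hk ht

theorem exists_play_maximizing_payoff [Fintype V] {ρ₀ : ℕ → V} (hρ₀ : IsPlay G ρ₀) :
    ∃ ρ, IsPlay G ρ ∧ ρ 0 = ρ₀ 0 ∧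
      ∀ ρ', IsPlay G ρ' → InfOcc ρ' = InfOcc ρ₀ → payoff G ρ' ≤ payoff G ρ := by
  obtain ⟨N, hN⟩ := eventually_atTop.1 (eventually_mem_infOcc ρ₀)
  obtain ⟨_, ⟨c, k, hk, -, hc, hck, rfl⟩, hmax⟩ := Set.exists_max_image _ id
    (G.shortCycleMeans_finite _) (shortCycleMeans_nonempty hρ₀ hN)
  obtain ⟨ρ, hρ, hρ0, hinf, hle⟩ := exists_play_infOcc_eq_le_meanPayoff hρ₀ hk hc hck
  refine ⟨ρ, hρ, hρ0, fun ρ' hρ' h => payoff_le_payoff_of_infOcc_eq (h.trans hinf.symm) ?_⟩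
  exact (meanPayoff_le_of_eventually_mem hmax hρ' (h ▸ eventually_mem_infOcc ρ')).trans hle

theorem exists_isPlay (hsucc : ∀ v, ∃ u, G.E v u) (q₀ : V) : ∃ ρ, IsPlay G ρ ∧ ρ 0 = q₀ :=
  ⟨fun n => Nat.rec q₀ (fun _ v => (hsucc v).choose) n, fun _ => (hsucc _).choose_spec, rfl⟩

theorem exists_optimal_play [Fintype V] (hsucc : ∀ v, ∃ u, G.E v u) (q₀ : V) :
    ∃ ρ, IsPlay G ρ ∧ ρ 0 = q₀ ∧ ∀ ρ', IsPlay G ρ' → ρ' 0 = q₀ → payoff G ρ' ≤ payoff G ρ := by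
  let best : Set V → EReal := fun I =>
    ⨆ ρ : {ρ : ℕ → V // IsPlay G ρ ∧ ρ 0 = q₀ ∧ InfOcc ρ = I}, payoff G ρ
  have : Nonempty {ρ : ℕ → V // IsPlay G ρ ∧ ρ 0 = q₀} :=
    let ⟨ρ, h⟩ := exists_isPlay hsucc q₀; ⟨⟨ρ, h⟩⟩
  obtain ⟨_, ⟨ρ₀, rfl⟩, hmax⟩ := Set.exists_max_image
    (Set.range fun ρ : {ρ : ℕ → V // IsPlay G ρ ∧ ρ 0 = q₀} => InfOcc ρ.1) best
    (Set.toFinite _) (Set.range_nonempty _)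
  obtain ⟨ρ, hρ, hρ0, hle⟩ := exists_play_maximizing_payoff ρ₀.2.1
  refine ⟨ρ, hρ, hρ0.trans ρ₀.2.2, fun ρ' hρ' h0 => ?_⟩
  calc payoff G ρ' ≤ best (InfOcc ρ') := le_iSup_of_le ⟨ρ', hρ', h0, rfl⟩ le_rfl
    _ ≤ best (InfOcc ρ₀.1) := hmax _ ⟨⟨ρ', hρ', h0⟩, rfl⟩
    _ ≤ payoff G ρ := iSup_le fun ρ'' => hle ρ''.1 ρ''.2.1 ρ''.2.2.2

end Game

namespace Strat1

variable {G : Game V}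

noncomputable def playOf (σ : Strat1 G) (q₀ : V) : ℕ → V
  | 0 => q₀
  | n + 1 => σ.f (List.ofFn fun i : Fin n => σ.playOf q₀ i) (σ.playOf q₀ n)

theorem exists_consistent_play (h1 : ∀ v, G.isP1 v) (σ : Strat1 G) (q₀ : V) :
    ∃ ρ, IsPlay G ρ ∧ ρ 0 = q₀ ∧ Consistent1 G σ ρ :=
  ⟨σ.playOf q₀, fun n => by rw [playOf]; exact σ.valid _ _ (h1 _), by rw [playOf],
    fun n _ => by rw [playOf]⟩

theorem consistent_unique (h1 : ∀ v, G.isP1 v) {σ : Strat1 G} {ρ ρ' : ℕ → V}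
    (hρ : Consistent1 G σ ρ) (hρ' : Consistent1 G σ ρ') (h0 : ρ 0 = ρ' 0) : ρ = ρ' := by
  funext n
  induction n using Nat.strong_induction_on with
  | _ n ih =>
  cases n with
  | zero => exact h0
  | succ n =>
    rw [hρ n (h1 _), hρ' n (h1 _), ih n n.lt_succ_self]
    congr 2
    exact funext fun i => ih i (by omega)

theorem val1_eq_payoff (h1 : ∀ v, G.isP1 v) {σ : Strat1 G} {ρ : ℕ → V} {q₀ : V}
    (hρ : IsPlay G ρ) (h0 : ρ 0 = q₀) (hc : Consistent1 G σ ρ) : val1 G σ q₀ = payoff G ρ :=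
  le_antisymm (iInf_le_of_le ⟨ρ, hρ, h0, hc⟩ le_rfl) <| le_iInf fun ρ' =>
    (congrArg (payoff G) (consistent_unique h1 ρ'.2.2.2 hc (ρ'.2.2.1.trans h0.symm))).ge

open Classical in
noncomputable def ofPlay (hsucc : ∀ v, ∃ u, G.E v u) {ρ : ℕ → V} (hρ : IsPlay G ρ) : Strat1 G where
  f h c := if c = ρ h.length then ρ (h.length + 1) else (hsucc c).choose
  valid h c _ := by
    split_ifs with hc
    · exact hc ▸ hρ h.length
    · exact (hsucc c).choose_spec

theorem consistent_ofPlay (hsucc : ∀ v, ∃ u, G.E v u) {ρ : ℕ → V} (hρ : IsPlay G ρ) :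
    Consistent1 G (ofPlay hsucc hρ) ρ := fun n _ => by
  simp [ofPlay]

end Strat1

/-- in a one-player game (all states belong to Player 1),
Player 1 has an optimal strategy: the supremum over strategies is attained. -/
theorem exists_optimal_strategy_one_player {V : Type} [Fintype V] (G : Game V)
    (h1 : ∀ v, G.isP1 v) (hsucc : ∀ v, ∃ u, G.E v u) (q₀ : V) :
    ∃ σ : Strat1 G, val1 G σ q₀ = lowVal G q₀ := by
  obtain ⟨ρ, hρ, hρ0, hopt⟩ := G.exists_optimal_play hsucc q₀
  refine ⟨Strat1.ofPlay hsucc hρ,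
    le_antisymm (le_iSup (fun σ => val1 G σ q₀) _) (iSup_le fun σ => ?_)⟩
  obtain ⟨ρ', hρ', hρ'0, hc⟩ := σ.exists_consistent_play h1 q₀
  rw [Strat1.val1_eq_payoff h1 hρ' hρ'0 hc,
    Strat1.val1_eq_payoff h1 hρ hρ0 (Strat1.consistent_ofPlay hsucc hρ)]
  exact hopt ρ' hρ' hρ'0
end

section
/- In the one-state one-player game with states q₁ (priority 1) and q₂ (priority 0), edges q₁→q₁ with weight 1, q₁→q₂ with weight 0, and q₂→q₁ with weight 0, all states controlled by Player 1: the value from q₁ equals 1, but every finite-memory strategy of Player 1 achieves value strictly less than 1. Hence optimal strategies in mean-payoff parity games may require infinite memory. -/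
open Filter

variable {V : Type}

/-- The game of Example 1: state `true` is q₁ (priority 1), state `false` is q₂
(priority 0); edges q₁→q₁ (weight 1), q₁→q₂ (weight 0), q₂→q₁ (weight 0);
all states belong to Player 1. -/
def exGame : Game Bool where
  isP1 _ := True
  E a b := a = true ∨ b = true
  w a b := if a = true ∧ b = true then 1 else 0
  col v := if v = true then 1 else 0

/-!
Every step of a play has weight `1` except those entering or leaving `q₂`, and a play is
parity-winning iff it visits `q₂` infinitely often. Visiting `q₂` exactly at the perfect
squares is parity-winning and loses only `O(√n)` weight in `n` steps, so its mean payoff is `1`.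
All states belong to Player 1, so a strategy determines a single play from `q₁`. If that play
eventually stays in `q₁` it loses the parity condition; if instead it visits `q₂` in every
window of `m + 1` steps, then after `(m + 1) t` steps it has collected weight at most `m t`,
so its mean payoff is at most `m / (m + 1)`.
-/

open Filter Finset Topology

section Payoff

variable {G : Game V} {ρ : ℕ → V}

lemma avgW_le_of_forall_w_le {c : ℝ} (hw : ∀ a b, G.w a b ≤ c) (ρ : ℕ → V) {n : ℕ}
    (hn : n ≠ 0) : avgW G ρ n ≤ c := by
  rw [avgW, div_le_iff₀ (by positivity)]
  calc ∑ i ∈ range n, G.w (ρ i) (ρ (i + 1)) ≤ ∑ _i ∈ range n, c := sum_le_sum fun i _ => hw _ _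
    _ = c * n := by simp [mul_comm]

lemma payoff_le_of_frequently_avgW_le {c : ℝ} (h : ∃ᶠ n in atTop, avgW G ρ n ≤ c) :
    payoff G ρ ≤ c := by
  unfold payoff
  split_ifs
  · exact liminf_le_of_frequently_le (h.mono fun n hn => EReal.coe_le_coe hn)
  · exact bot_le

lemma payoff_le_of_forall_w_le {c : ℝ} (hw : ∀ a b, G.w a b ≤ c) (ρ : ℕ → V) :
    payoff G ρ ≤ c :=
  payoff_le_of_frequently_avgW_le
    ((eventually_ne_atTop 0).mono fun _ hn => avgW_le_of_forall_w_le hw ρ hn).frequently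

lemma payoff_eq_of_tendsto {x : ℝ} (hwin : ParityWin G ρ)
    (h : Tendsto (avgW G ρ) atTop (𝓝 x)) : payoff G ρ = x := by
  rw [payoff, if_pos hwin]
  exact (EReal.tendsto_coe.mpr h).liminf_eq

lemma payoff_eq_bot (h : ¬ ParityWin G ρ) : payoff G ρ = ⊥ := by
  rw [payoff, if_neg h]

end Payoff

section OnePlayer

variable {G : Game V}

/-- In a one-player game, the unique play from `q₀` consistent with `σ`. -/
def Strat1.play (σ : Strat1 G) (q₀ : V) : ℕ → V
  | 0 => q₀
  | n + 1 => σ.f (List.ofFn fun i : Fin n => σ.play q₀ i) (σ.play q₀ n)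

variable (σ : Strat1 G) (q₀ : V)

lemma Strat1.play_zero : σ.play q₀ 0 = q₀ := by
  rw [Strat1.play]

lemma Strat1.consistent1_play : Consistent1 G σ (σ.play q₀) := fun n _ => by
  rw [Strat1.play]

lemma Strat1.isPlay_play (hP1 : ∀ v, G.isP1 v) : IsPlay G (σ.play q₀) := fun n => by
  rw [Strat1.play]
  exact σ.valid _ _ (hP1 _)

lemma val1_le_payoff_play (hP1 : ∀ v, G.isP1 v) : val1 G σ q₀ ≤ payoff G (σ.play q₀) :=
  iInf_le (fun ρ : {ρ // IsPlay G ρ ∧ ρ 0 = q₀ ∧ Consistent1 G σ ρ} => payoff G ρ.1)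
    ⟨_, σ.isPlay_play q₀ hP1, σ.play_zero q₀, σ.consistent1_play q₀⟩

end OnePlayer

lemma sum_range_mul_le_of_exists_nonpos {f : ℕ → ℝ} (hf : ∀ i, f i ≤ 1) {m : ℕ}
    (hblock : ∀ n, ∃ k ≤ m, f (n + k) ≤ 0) (t : ℕ) :
    ∑ i ∈ range ((m + 1) * t), f i ≤ m * t := by
  induction t with
  | zero => simp
  | succ t ih =>
    obtain ⟨k, hkm, hk⟩ := hblock ((m + 1) * t)
    have hmem : k ∈ range (m + 1) := mem_range.mpr (by omega)
    have hblock_sum : ∑ x ∈ range (m + 1), f ((m + 1) * t + x) ≤ m := by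
      rw [← add_sum_erase _ _ hmem]
      have := sum_le_card_nsmul ((range (m + 1)).erase k) (fun x => f ((m + 1) * t + x)) 1
        fun x _ => hf _
      simp only [card_erase_of_mem hmem, card_range, add_tsub_cancel_right, nsmul_eq_mul,
        mul_one] at this
      linarith
    rw [mul_add_one, sum_range_add]
    push_cast
    linarith

lemma card_filter_isSquare_range_le (n : ℕ) :
    #{i ∈ range (n + 1) | IsSquare i} ≤ Nat.sqrt n + 1 := by
  calc #{i ∈ range (n + 1) | IsSquare i}
      ≤ #((range (Nat.sqrt n + 1)).image fun r => r * r) := by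
        refine card_le_card fun i hi => ?_
        obtain ⟨hin, r, rfl⟩ := mem_filter.mp hi
        exact mem_image.mpr ⟨r, mem_range.mpr (Nat.lt_succ_of_le
          (Nat.le_sqrt.mpr (Nat.lt_succ_iff.mp (mem_range.mp hin)))), rfl⟩
    _ ≤ Nat.sqrt n + 1 := card_image_le.trans (card_range _).le

section ExGame

variable {ρ : ℕ → Bool}

lemma exGame_isP1 (v : Bool) : exGame.isP1 v := trivial

lemma exGame_w_le_one (a b : Bool) : exGame.w a b ≤ 1 := by
  cases a <;> cases b <;> norm_num [exGame]

lemma exGame_w_false (a : Bool) : exGame.w a false = 0 := by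
  simp [exGame]

lemma one_sub_le_exGame_w (a b : Bool) :
    1 - (if a = false then 1 else 0) - (if b = false then 1 else 0) ≤ exGame.w a b := by
  cases a <;> cases b <;> norm_num [exGame]

lemma exGame_parityWin_iff : ParityWin exGame ρ ↔ ∃ᶠ n in atTop, ρ n = false := by
  refine ⟨fun hwin => ?_, fun hfalse => ?_⟩
  · by_contra hfalse
    have htrue : ∀ᶠ n in atTop, ρ n = true := (not_frequently.mp hfalse).mono fun n => by simp
    have hinf : InfOcc ρ = {true} := by
      ext (_ | _)
      · exact iff_of_false hfalse (by simp)
      · exact iff_of_true htrue.frequently rfl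
    simp [ParityWin, hinf, exGame] at hwin
  · have : sInf (exGame.col '' InfOcc ρ) = 0 := Nat.sInf_eq_zero.mpr (.inl ⟨false, hfalse, rfl⟩)
    rw [ParityWin, this]
    exact Even.zero

lemma exGame_sum_w_ge (ρ : ℕ → Bool) (n : ℕ) :
    (n : ℝ) - 2 * #{i ∈ range (n + 1) | ρ i = false} ≤
      ∑ i ∈ range n, exGame.w (ρ i) (ρ (i + 1)) := by
  set g : ℕ → ℝ := fun i => if ρ i = false then 1 else 0
  have hg : ∀ i, 0 ≤ g i := fun i => by positivity
  have hcount : ∑ i ∈ range (n + 1), g i = #{i ∈ range (n + 1) | ρ i = false} := by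
    simp [g]
  have hleft : ∑ i ∈ range n, g i ≤ ∑ i ∈ range (n + 1), g i := by
    rw [sum_range_succ]; linarith [hg n]
  have hright : ∑ i ∈ range n, g (i + 1) ≤ ∑ i ∈ range (n + 1), g i := by
    rw [sum_range_succ']; linarith [hg 0]
  calc (n : ℝ) - 2 * #{i ∈ range (n + 1) | ρ i = false}
      ≤ ∑ i ∈ range n, (1 - g i - g (i + 1)) := by
        simp only [sum_sub_distrib, sum_const, card_range, nsmul_one]
        linarith
    _ ≤ ∑ i ∈ range n, exGame.w (ρ i) (ρ (i + 1)) :=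
        sum_le_sum fun i _ => one_sub_le_exGame_w _ _

lemma exGame_payoff_le_of_forall_exists_false {m : ℕ} (h : ∀ n, ∃ k ≤ m, ρ (n + k) = false) :
    payoff exGame ρ ≤ ((m / (m + 1) : ℝ) : EReal) := by
  have hblock : ∀ n, ∃ k ≤ m, exGame.w (ρ (n + k)) (ρ (n + k + 1)) ≤ 0 := fun n => by
    obtain ⟨k, hkm, hk⟩ := h (n + 1)
    refine ⟨k, hkm, ?_⟩
    rw [show n + k + 1 = n + 1 + k by omega, hk, exGame_w_false]
  refine payoff_le_of_frequently_avgW_le (frequently_atTop.mpr fun N => ?_)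
  refine ⟨(m + 1) * (N + 1), by nlinarith, ?_⟩
  have hpos : (0 : ℝ) < (m + 1) * (N + 1) := by positivity
  rw [avgW, div_le_div_iff₀ (by exact_mod_cast hpos) (by positivity)]
  have := sum_range_mul_le_of_exists_nonpos (f := fun i => exGame.w (ρ i) (ρ (i + 1)))
    (fun i => exGame_w_le_one _ _) hblock (N + 1)
  push_cast at this ⊢
  nlinarith

end ExGame

/-- Visits `q₂` infinitely often but with density zero; the squares `0` and `1` are skipped
because they are adjacent. -/
def sparsePlay (n : ℕ) : Bool := !decide (IsSquare n ∧ 4 ≤ n)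

lemma sparsePlay_eq_false_iff {n : ℕ} : sparsePlay n = false ↔ IsSquare n ∧ 4 ≤ n := by
  simp [sparsePlay]

lemma isPlay_sparsePlay : IsPlay exGame sparsePlay := by
  intro n
  show sparsePlay n = true ∨ sparsePlay (n + 1) = true
  by_contra! h
  simp only [ne_eq, Bool.not_eq_true, sparsePlay_eq_false_iff] at h
  obtain ⟨⟨⟨a, rfl⟩, ha⟩, ⟨b, hb⟩, -⟩ := h
  have hab : a + 1 ≤ b := Nat.mul_self_lt_mul_self_iff.mp (by omega)
  nlinarith [Nat.mul_self_le_mul_self hab]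

lemma frequently_sparsePlay_eq_false : ∃ᶠ n in atTop, sparsePlay n = false :=
  frequently_atTop.mpr fun N =>
    ⟨(N + 2) * (N + 2), by nlinarith, sparsePlay_eq_false_iff.mpr ⟨⟨N + 2, rfl⟩, by nlinarith⟩⟩

lemma card_sparsePlay_eq_false_le (n : ℕ) :
    #{i ∈ range (n + 1) | sparsePlay i = false} ≤ Nat.sqrt n + 1 :=
  (card_le_card (monotone_filter_right _ fun _ _ hi => (sparsePlay_eq_false_iff.mp hi).1)).trans
    (card_filter_isSquare_range_le n)

lemma tendsto_avgW_sparsePlay : Tendsto (avgW exGame sparsePlay) atTop (𝓝 1) := by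
  have hlow : Tendsto (fun n : ℕ => 1 - 2 * ((√(n : ℝ))⁻¹ + (n : ℝ)⁻¹)) atTop (𝓝 1) := by
    have hsqrt := tendsto_inv_atTop_zero.comp
      (Real.tendsto_sqrt_atTop.comp tendsto_natCast_atTop_atTop)
    simpa using tendsto_const_nhds.sub
      ((hsqrt.add (tendsto_inv_atTop_zero.comp tendsto_natCast_atTop_atTop)).const_mul (2 : ℝ))
  refine tendsto_of_tendsto_of_tendsto_of_le_of_le' hlow tendsto_const_nhds ?_ ?_
  · filter_upwards [eventually_gt_atTop 0] with n hn
    have hn' : (0 : ℝ) < n := by exact_mod_cast hn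
    have hcount : (#{i ∈ range (n + 1) | sparsePlay i = false} : ℝ) ≤ √(n : ℝ) + 1 :=
      calc (#{i ∈ range (n + 1) | sparsePlay i = false} : ℝ) ≤ Nat.sqrt n + 1 := by
            exact_mod_cast card_sparsePlay_eq_false_le n
        _ ≤ √(n : ℝ) + 1 := by grw [Real.nat_sqrt_le_real_sqrt]
    have hsqrt : (√(n : ℝ))⁻¹ * n = √(n : ℝ) := by
      rw [← Real.sqrt_div_self, div_mul_cancel₀ _ hn'.ne']
    have hinv : (n : ℝ)⁻¹ * n = 1 := inv_mul_cancel₀ hn'.ne'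
    rw [avgW, le_div_iff₀ hn']
    linarith [exGame_sum_w_ge sparsePlay n]
  · filter_upwards [eventually_ne_atTop 0] with n hn
    exact avgW_le_of_forall_w_le exGame_w_le_one _ hn

lemma payoff_sparsePlay : payoff exGame sparsePlay = 1 :=
  payoff_eq_of_tendsto (exGame_parityWin_iff.mpr frequently_sparsePlay_eq_false)
    tendsto_avgW_sparsePlay

/-- the value from q₁ is 1, but every finite-memory strategy of
Player 1 (one whose induced plays either visit q₂ only finitely often, or have
blocks of q₁'s of length bounded by some `m`) achieves value strictly less
than 1. -/
theorem exGame_value_one_but_finite_memory_suboptimal :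
    (⨆ ρ : {ρ : ℕ → Bool // IsPlay exGame ρ ∧ ρ 0 = true}, payoff exGame ρ.val) = (1 : EReal) ∧
    ∀ σ : Strat1 exGame,
      (∃ m : ℕ, ∀ ρ : ℕ → Bool, IsPlay exGame ρ → ρ 0 = true → Consistent1 exGame σ ρ →
        ((∀ᶠ n in atTop, ρ n = true) ∨ ∀ n, ∃ k ≤ m, ρ (n + k) = false)) →
      val1 exGame σ true < (1 : EReal) := by
  refine ⟨le_antisymm (iSup_le fun ρ => ?_) ?_, fun σ ⟨m, hm⟩ => ?_⟩
  · exact_mod_cast payoff_le_of_forall_w_le exGame_w_le_one ρ.1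
  · exact le_iSup_of_le ⟨sparsePlay, isPlay_sparsePlay, rfl⟩ payoff_sparsePlay.ge
  refine (val1_le_payoff_play σ true exGame_isP1).trans_lt ?_
  rcases hm _ (σ.isPlay_play true exGame_isP1) (σ.play_zero true) (σ.consistent1_play true)
    with htrue | hwindow
  · have hlose : ¬ ParityWin exGame (σ.play true) :=
      exGame_parityWin_iff.not.mpr (not_frequently.mpr (htrue.mono fun _ h => by simp [h]))
    rw [payoff_eq_bot hlose]
    exact EReal.bot_lt_coe 1
  · refine (exGame_payoff_le_of_forall_exists_false hwindow).trans_lt ?_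
    exact_mod_cast (div_lt_one (by positivity)).mpr (lt_add_one (m : ℝ))
end

section
/- In every finite mean-payoff co-Büchi game (priorities contained in {1,2}), Player 1 has a memoryless optimal strategy from every state. -/
open Filter

variable {V : Type}

/-!
Fix a threshold `c` and shift all weights by `-c`. Relative to a region `W` already won by
Player 1, call a state safe if, from it with some finite initial energy, Player 2 cannot force a
priority-1 state or negative energy without Player 1 reaching `W`. The least safe energy is a
potential that decreases by at most the shifted weight of each move Player 1 chooses or Player 2
is allowed, so a positional strategy keeps the energy bounded below and the priorities
eventually `2`: payoff at least `c`. Alternating "add the safe states, take the Player 1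
attractor" grows such a positionally won region until it is stable. Outside a stable region
every state is unsafe for every energy, so Player 2, tracking the energy, forces priority 1 or
negative energy again and again against any strategy of Player 1: payoff at most `c`. Hence for
each `c`, either a positional strategy secures `c` or no strategy secures more, and a positional
strategy of maximal value among the finitely many is optimal.
-/

section Attractor

variable {α : Type*} (own : α → Prop) (R : α → α → Prop) (T : Set α)

def attractorStage : ℕ → Set α
  | 0 => T
  | n + 1 => attractorStage n ∪ {a | own a ∧ ∃ b, R a b ∧ b ∈ attractorStage n} ∪
      {a | ¬ own a ∧ (∃ b, R a b) ∧ ∀ b, R a b → b ∈ attractorStage n}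

def attractor : Set α := ⋃ n, attractorStage own R T n

noncomputable def attractorRank (a : α) : ℕ := sInf {n | a ∈ attractorStage own R T n}

variable {own R T}

lemma attractorStage_mono : Monotone (attractorStage own R T) :=
  monotone_nat_of_le_succ fun _ _ h => Or.inl (Or.inl h)

lemma attractorStage_subset_attractor (n : ℕ) : attractorStage own R T n ⊆ attractor own R T :=
  Set.subset_iUnion (attractorStage own R T) n

lemma subset_attractor : T ⊆ attractor own R T := attractorStage_subset_attractor 0

lemma mem_attractor_of_own {a b : α} (ha : own a) (hab : R a b) (hb : b ∈ attractor own R T) :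
    a ∈ attractor own R T := by
  obtain ⟨n, hn⟩ := Set.mem_iUnion.mp hb
  exact attractorStage_subset_attractor (n + 1) (Or.inl (Or.inr ⟨ha, b, hab, hn⟩))

lemma mem_attractor_of_forall {a : α} (ha : ¬ own a) (hfin : {b | R a b}.Finite)
    (hex : ∃ b, R a b) (hall : ∀ b, R a b → b ∈ attractor own R T) :
    a ∈ attractor own R T := by
  choose! stage hstage using fun b hb => Set.mem_iUnion.mp (hall b hb)
  obtain ⟨N, hN⟩ := (hfin.image stage).bddAbove
  refine attractorStage_subset_attractor (N + 1) (Or.inr ⟨ha, hex, fun b hb => ?_⟩)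
  exact attractorStage_mono (hN ⟨b, hb, rfl⟩) (hstage b hb)

lemma attractorRank_le {a : α} {n : ℕ} (h : a ∈ attractorStage own R T n) :
    attractorRank own R T a ≤ n :=
  Nat.sInf_le h

lemma exists_attractorRank_eq_succ {a : α} (ha : a ∈ attractor own R T) (haT : a ∉ T) :
    ∃ n, attractorRank own R T a = n + 1 ∧ a ∈ attractorStage own R T (n + 1) ∧
      a ∉ attractorStage own R T n := by
  have hmem : a ∈ attractorStage own R T (attractorRank own R T a) :=
    Nat.sInf_mem (Set.mem_iUnion.mp ha)
  obtain ⟨n, hn⟩ : ∃ n, attractorRank own R T a = n + 1 := by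
    refine Nat.exists_eq_add_one.mpr (Nat.pos_of_ne_zero fun h => haT ?_)
    rwa [h] at hmem
  rw [hn] at hmem
  exact ⟨n, hn, hmem, Nat.notMem_of_lt_sInf (s := {n | a ∈ attractorStage own R T n})
    (by unfold attractorRank at hn; omega)⟩

lemma exists_move_attractorRank_lt {a : α} (ha : a ∈ attractor own R T) (haT : a ∉ T)
    (hown : own a) :
    ∃ b, R a b ∧ b ∈ attractor own R T ∧ attractorRank own R T b < attractorRank own R T a := by
  obtain ⟨n, hrank, (hn | ⟨-, b, hab, hb⟩) | ⟨hnot, -⟩, hnotn⟩ :=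
    exists_attractorRank_eq_succ ha haT
  · exact absurd hn hnotn
  · exact ⟨b, hab, attractorStage_subset_attractor n hb,
      hrank ▸ Nat.lt_succ_of_le (attractorRank_le hb)⟩
  · exact absurd hown hnot

lemma attractorRank_lt_of_move {a b : α} (ha : a ∈ attractor own R T) (haT : a ∉ T)
    (hown : ¬ own a) (hab : R a b) :
    b ∈ attractor own R T ∧ attractorRank own R T b < attractorRank own R T a := by
  obtain ⟨n, hrank, (hn | ⟨hown', -⟩) | ⟨-, -, hall⟩, hnotn⟩ := exists_attractorRank_eq_succ ha haT
  · exact absurd hn hnotn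
  · exact absurd hown' hown
  · exact ⟨attractorStage_subset_attractor n (hall b hab),
      hrank ▸ Nat.lt_succ_of_le (attractorRank_le (hall b hab))⟩

lemma notMem_of_move_of_attractor_subset {S : Set α} (hST : S ⊆ T) (hS : attractor own R T ⊆ S)
    {a b : α} (ha : a ∉ S) (hown : own a) (hab : R a b) : b ∉ S :=
  fun hb => ha (hS (mem_attractor_of_own hown hab (subset_attractor (hST hb))))

lemma exists_move_notMem_of_attractor_subset {S : Set α} (hST : S ⊆ T)
    (hS : attractor own R T ⊆ S) {a : α} (ha : a ∉ S) (hown : ¬ own a) (hex : ∃ b, R a b) :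
    ∃ b, R a b ∧ b ∉ S := by
  by_contra! hall
  exact ha (hS (attractorStage_subset_attractor 1
    (Or.inr ⟨hown, hex, fun b hb => hST (hall b hb)⟩)))

end Attractor

lemma exists_ge_mem_of_rank_decreasing {α : Type*} {S T : Set α} (μ : α → ℕ) (a : ℕ → α)
    {t₀ : ℕ} (h₀ : a t₀ ∈ S)
    (hstep : ∀ t, t₀ ≤ t → a t ∈ S → a t ∉ T → a (t + 1) ∈ S ∧ μ (a (t + 1)) < μ (a t)) :
    ∃ t, t₀ ≤ t ∧ a t ∈ T := by
  suffices ∀ m t, t₀ ≤ t → a t ∈ S → μ (a t) ≤ m → ∃ t', t ≤ t' ∧ a t' ∈ T from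
    this _ t₀ le_rfl h₀ le_rfl
  intro m
  induction m with
  | zero =>
    intro t ht hS hμ
    by_contra! hnot
    have := (hstep t ht hS (hnot t le_rfl)).2
    omega
  | succ m ih =>
    intro t ht hS hμ
    by_cases hT : a t ∈ T
    · exact ⟨t, le_rfl, hT⟩
    · obtain ⟨hS', hlt⟩ := hstep t ht hS hT
      obtain ⟨t', ht', hT'⟩ := ih (t + 1) (by omega) hS' (by omega)
      exact ⟨t', by omega, hT'⟩

lemma exists_mem_infOcc_of_frequently {V : Type} [Finite V] {ρ : ℕ → V} {P : V → Prop}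
    (h : ∃ᶠ n in atTop, P (ρ n)) : ∃ v ∈ InfOcc ρ, P v := by
  by_contra! hnot
  have : ∀ᶠ n in atTop, ∀ v, P v → ρ n ≠ v := eventually_all.mpr fun v => by
    by_cases hv : P v
    · exact (not_frequently.mp fun hinf => hnot v hinf hv).mono fun _ hn _ => hn
    · exact Eventually.of_forall fun _ h' => absurd h' hv
  exact h (this.mono fun n hn hP => hn _ hP rfl)

namespace Game

section

variable {V : Type} (G : Game V)

def energy (c : ℝ) (ρ : ℕ → V) (n : ℕ) : ℝ := ∑ i ∈ Finset.range n, (G.w (ρ i) (ρ (i + 1)) - c)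

lemma energy_succ (c : ℝ) (ρ : ℕ → V) (n : ℕ) :
    G.energy c ρ (n + 1) = G.energy c ρ n + (G.w (ρ n) (ρ (n + 1)) - c) :=
  Finset.sum_range_succ _ _

lemma avgW_eq_add_energy_div (c : ℝ) (ρ : ℕ → V) {n : ℕ} (hn : n ≠ 0) :
    avgW G ρ n = c + G.energy c ρ n / n := by
  rw [avgW, energy, Finset.sum_sub_distrib, Finset.sum_const, Finset.card_range, nsmul_eq_mul]
  field_simp
  ring

end

section

variable {V : Type} [Finite V] (G : Game V)

lemma parityWin_of_eventually_col_eq_two {ρ : ℕ → V}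
    (h : ∀ᶠ n in atTop, G.col (ρ n) = 2) : ParityWin G ρ := by
  obtain ⟨v, hv, -⟩ := exists_mem_infOcc_of_frequently (ρ := ρ) (P := fun _ => True)
    (Frequently.of_forall fun _ => trivial)
  have himg : G.col '' InfOcc ρ = {2} := by
    refine Set.eq_singleton_iff_nonempty_unique_mem.mpr ⟨⟨_, Set.mem_image_of_mem _ hv⟩, ?_⟩
    rintro _ ⟨u, hu, rfl⟩
    obtain ⟨n, hn, hn2⟩ := (hu.and_eventually h).exists
    rwa [← hn]
  rw [ParityWin, himg, csInf_singleton]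
  decide

lemma eventually_col_eq_two_of_parityWin (hcol : ∀ v, G.col v = 1 ∨ G.col v = 2) {ρ : ℕ → V}
    (h : ParityWin G ρ) : ∀ᶠ n in atTop, G.col (ρ n) = 2 := by
  by_contra hnot
  obtain ⟨v, hv, hv2⟩ :=
    exists_mem_infOcc_of_frequently (P := fun v => G.col v ≠ 2) (not_eventually.mp hnot)
  have hv1 : G.col v = 1 := (hcol v).resolve_right hv2
  have hmin : sInf (G.col '' InfOcc ρ) = 1 := by
    have h1 : 1 ∈ G.col '' InfOcc ρ := ⟨v, hv, hv1⟩
    have hle := Nat.sInf_le h1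
    obtain ⟨u, -, hu⟩ := Nat.sInf_mem ⟨1, h1⟩
    rcases hcol u with h' | h' <;> omega
  rw [ParityWin, hmin] at h
  exact Nat.not_even_one h

lemma le_payoff_of_eventually_le_energy {c K : ℝ} {ρ : ℕ → V}
    (hcol : ∀ᶠ n in atTop, G.col (ρ n) = 2) (hK : ∀ᶠ n in atTop, K ≤ G.energy c ρ n) :
    (c : EReal) ≤ payoff G ρ := by
  rw [payoff, if_pos (G.parityWin_of_eventually_col_eq_two hcol)]
  have hlim : Tendsto (fun n : ℕ => ((c + K / n : ℝ) : EReal)) atTop (nhds c) := by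
    have := (tendsto_const_div_atTop_nhds_zero_nat K).const_add c
    rw [add_zero] at this
    exact (continuous_coe_real_ereal.tendsto c).comp this
  rw [← hlim.liminf_eq]
  refine liminf_le_liminf ?_
  filter_upwards [hK, eventually_ne_atTop 0] with n hn hn0
  rw [EReal.coe_le_coe_iff, G.avgW_eq_add_energy_div c ρ hn0]
  gcongr

lemma payoff_le_of_frequently (hcol : ∀ v, G.col v = 1 ∨ G.col v = 2) {c : ℝ} {ρ : ℕ → V}
    (h : ∃ᶠ n in atTop, G.col (ρ n) = 1 ∨ G.energy c ρ n < 0) : payoff G ρ ≤ c := by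
  by_cases hwin : ParityWin G ρ
  · rw [payoff, if_pos hwin]
    refine liminf_le_of_frequently_le' ?_
    refine (h.and_eventually (G.eventually_col_eq_two_of_parityWin hcol hwin)).mono ?_
    rintro n ⟨hn, hn2⟩
    have hneg : G.energy c ρ n < 0 := hn.resolve_left (by omega)
    have hn0 : n ≠ 0 := by
      rintro rfl
      simp [energy] at hneg
    rw [EReal.coe_le_coe_iff, G.avgW_eq_add_energy_div c ρ hn0, add_le_iff_nonpos_right]
    exact (div_neg_of_neg_of_pos hneg (by positivity)).le
  · rw [payoff, if_neg hwin]
    exact bot_le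

end

section

variable {V : Type} (G : Game V) (c : ℝ) (W : Set V)

/-- Moves of the energy game on configurations `(state, energy)` relative to a region `W`
already won by Player 1: plays stop in `W`, and Player 2 may not move into it. -/
def EnergyMove (a b : V × ℝ) : Prop :=
  a.1 ∉ W ∧ G.E a.1 b.1 ∧ (¬ G.isP1 a.1 → b.1 ∉ W) ∧ b.2 = a.2 + (G.w a.1 b.1 - c)

def lossConfigs : Set (V × ℝ) := {a | G.col a.1 = 1 ∨ a.2 < 0}

def energyAttractor : Set (V × ℝ) :=
  attractor (fun a => ¬ G.isP1 a.1) (G.EnergyMove c W) G.lossConfigs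

def safeStates : Set V := {v | v ∉ W ∧ ∃ e, (v, e) ∉ G.energyAttractor c W}

noncomputable def energyRank : V × ℝ → ℕ :=
  attractorRank (fun a => ¬ G.isP1 a.1) (G.EnergyMove c W) G.lossConfigs

/-- The least safe initial energy at `v` (junk value `0` if there is none). -/
noncomputable def minCredit (v : V) : ℝ := sInf {e | (v, e) ∉ G.energyAttractor c W}

variable {G c W}

/-- Holds because losing energies are `e < 0`, strictly, and Player 1 has finitely many moves;
it makes the infimum in `minCredit` attained. -/
lemma eventually_mem_energyAttractorStage [Finite V] (n : ℕ) {v : V} {e : ℝ}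
    (h : (v, e) ∈ attractorStage (fun a => ¬ G.isP1 a.1) (G.EnergyMove c W) G.lossConfigs n) :
    ∀ᶠ e' in nhds e,
      (v, e') ∈ attractorStage (fun a => ¬ G.isP1 a.1) (G.EnergyMove c W) G.lossConfigs n := by
  induction n generalizing v e with
  | zero =>
    rcases h with h | h
    · exact Eventually.of_forall fun _ => Or.inl h
    · exact (eventually_lt_nhds h).mono fun _ he => Or.inr he
  | succ n ih =>
    have hshift (t f : ℝ) (h : e + t = f) : Tendsto (· + t) (nhds e) (nhds f) :=
      (continuous_add_const t).tendsto' e f h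
    rcases h with (h | ⟨hown, ⟨u, f⟩, hmove, hb⟩) | ⟨hown, ⟨⟨u₀, f₀⟩, hmove₀⟩, hall⟩
    · exact (ih h).mono fun _ h => Or.inl (Or.inl h)
    · refine ((hshift (f - e) f (by ring)).eventually (ih hb)).mono fun e' he' => ?_
      obtain ⟨hv, hE, hW, hf⟩ := hmove
      refine Or.inl (Or.inr ⟨hown, (u, e' + (f - e)), ⟨hv, hE, hW, ?_⟩, he'⟩)
      simp only at hf ⊢
      linarith
    · have hmoves : ∀ u : V, ∀ᶠ e' in nhds e, G.EnergyMove c W (v, e) (u, e + (G.w v u - c)) →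
          (u, e' + (G.w v u - c)) ∈
            attractorStage (fun a => ¬ G.isP1 a.1) (G.EnergyMove c W) G.lossConfigs n := by
        intro u
        by_cases hm : G.EnergyMove c W (v, e) (u, e + (G.w v u - c))
        · exact ((hshift _ _ rfl).eventually (ih (hall _ hm))).mono fun _ h _ => h
        · exact Eventually.of_forall fun _ h => absurd h hm
      filter_upwards [eventually_all.mpr hmoves] with e' he'
      obtain ⟨hv, hE₀, hW₀, -⟩ := hmove₀
      refine Or.inr ⟨hown, ⟨(u₀, e' + (G.w v u₀ - c)), hv, hE₀, hW₀, rfl⟩, fun ⟨u, f⟩ hm => ?_⟩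
      obtain ⟨-, hE, hW, hf⟩ := hm
      simp only at hf
      exact hf ▸ he' u ⟨hv, hE, hW, rfl⟩

end

section

variable {V : Type} {G : Game V} {c : ℝ} {W : Set V}

lemma isClosed_setOf_notMem_energyAttractor [Finite V] (v : V) :
    IsClosed {e | (v, e) ∉ G.energyAttractor c W} := by
  refine IsOpen.isClosed_compl (s := {e | (v, e) ∈ G.energyAttractor c W}) ?_
  refine isOpen_iff_mem_nhds.mpr fun e he => ?_
  obtain ⟨n, hn⟩ := Set.mem_iUnion.mp he
  exact (eventually_mem_energyAttractorStage n hn).mono fun _ h =>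
    attractorStage_subset_attractor n h

lemma nonneg_of_notMem_energyAttractor {v : V} {e : ℝ} (h : (v, e) ∉ G.energyAttractor c W) :
    0 ≤ e :=
  not_lt.mp fun hlt => h (subset_attractor (Or.inr hlt))

lemma minCredit_nonneg (v : V) : 0 ≤ G.minCredit c W v :=
  Real.sInf_nonneg fun _ => nonneg_of_notMem_energyAttractor

lemma minCredit_le {v : V} {e : ℝ} (h : (v, e) ∉ G.energyAttractor c W) : G.minCredit c W v ≤ e :=
  csInf_le ⟨0, fun _ => nonneg_of_notMem_energyAttractor⟩ h

lemma minCredit_notMem_energyAttractor [Finite V] {v : V} (hv : v ∈ G.safeStates c W) :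
    (v, G.minCredit c W v) ∉ G.energyAttractor c W :=
  (isClosed_setOf_notMem_energyAttractor v).csInf_mem hv.2
    ⟨0, fun _ => nonneg_of_notMem_energyAttractor⟩

lemma col_eq_two_of_mem_safeStates (hcol : ∀ v, G.col v = 1 ∨ G.col v = 2) {v : V}
    (hv : v ∈ G.safeStates c W) : G.col v = 2 := by
  obtain ⟨-, e, he⟩ := hv
  exact (hcol v).resolve_left fun h1 => he (subset_attractor (Or.inl h1))

variable (G c W) in
def KeepsCredit (v u : V) : Prop :=
  u ∈ W ∨ (u ∈ G.safeStates c W ∧ G.minCredit c W u ≤ G.minCredit c W v + (G.w v u - c))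

lemma keepsCredit_of_notMem_energyAttractor {v u : V}
    (h : (u, G.minCredit c W v + (G.w v u - c)) ∉ G.energyAttractor c W) :
    G.KeepsCredit c W v u := by
  by_cases hu : u ∈ W
  · exact Or.inl hu
  · exact Or.inr ⟨⟨hu, _, h⟩, minCredit_le h⟩

lemma exists_move_keepsCredit [Finite V] (hsucc : ∀ v, ∃ u, G.E v u) {v : V}
    (hv : v ∈ G.safeStates c W) (h1 : G.isP1 v) : ∃ u, G.E v u ∧ G.KeepsCredit c W v u := by
  by_contra! hall
  set e := G.minCredit c W v
  have hfin : {b | G.EnergyMove c W (v, e) b}.Finite :=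
    (Set.finite_range fun u => (u, e + (G.w v u - c))).subset fun ⟨u, f⟩ hm => ⟨u, by
      rw [show f = e + (G.w v u - c) from hm.2.2.2]⟩
  obtain ⟨u₀, hu₀⟩ := hsucc v
  refine minCredit_notMem_energyAttractor hv (mem_attractor_of_forall (not_not.mpr h1) hfin
    ⟨(u₀, e + (G.w v u₀ - c)), hv.1, hu₀, fun h => absurd h1 h, rfl⟩ fun ⟨u, f⟩ hm => ?_)
  obtain ⟨-, hE, -, hf⟩ := hm
  simp only at hf
  subst hf
  by_contra h
  exact hall u hE (keepsCredit_of_notMem_energyAttractor h)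

lemma keepsCredit_of_move [Finite V] {v u : V} (hv : v ∈ G.safeStates c W) (h1 : ¬ G.isP1 v)
    (hE : G.E v u) : G.KeepsCredit c W v u := by
  by_cases hu : u ∈ W
  · exact Or.inl hu
  · refine keepsCredit_of_notMem_energyAttractor fun hmem => minCredit_notMem_energyAttractor hv ?_
    exact mem_attractor_of_own h1 ⟨hv.1, hE, fun _ => hu, rfl⟩ hmem

end

section

variable {V : Type} (G : Game V) (c : ℝ)

def Positional : Type := {g : V → V // ∀ v, G.isP1 v → G.E v (g v)}

instance [Finite V] : Finite G.Positional := Subtype.finite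

variable {G} in
def Positional.toStrat1 (g : G.Positional) : Strat1 G := ⟨fun _ v => g.1 v, fun _ v => g.2 v⟩

lemma Positional.memoryless (g : G.Positional) : Memoryless1 g.toStrat1 := fun _ _ _ => rfl

lemma nonempty_positional (hsucc : ∀ v, ∃ u, G.E v u) : Nonempty G.Positional :=
  ⟨⟨fun v => (hsucc v).choose, fun v _ => (hsucc v).choose_spec⟩⟩

def extendRegion (W : Set V) : Set V := attractor G.isP1 G.E (G.safeStates c W ∪ W)

def region : ℕ → Set V
  | 0 => ∅
  | n + 1 => G.extendRegion c (region n)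

/-- Consistency with `g` is only required inside `W`, so the property survives changing `g`
outside `W`. -/
def Secures (g : V → V) (W : Set V) : Prop :=
  ∀ ρ T, IsPlay G ρ → ρ T ∈ W →
    (∀ t, T ≤ t → ρ t ∈ W → G.isP1 (ρ t) → ρ (t + 1) = g (ρ t)) → (c : EReal) ≤ payoff G ρ

variable {G c}

lemma energy_sub_le_energy_of_potential {ρ : ℕ → V} {φ : V → ℝ} (hφ : ∀ v, 0 ≤ φ v) {t₀ : ℕ}
    (h : ∀ t, t₀ ≤ t → φ (ρ (t + 1)) ≤ φ (ρ t) + (G.w (ρ t) (ρ (t + 1)) - c)) :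
    ∀ t, t₀ ≤ t → G.energy c ρ t₀ - φ (ρ t₀) ≤ G.energy c ρ t := by
  have key : ∀ t, t₀ ≤ t → G.energy c ρ t₀ - φ (ρ t₀) ≤ G.energy c ρ t - φ (ρ t) := by
    refine Nat.le_induction le_rfl fun t ht ih => ?_
    rw [energy_succ]
    linarith [h t ht]
  exact fun t ht => (key t ht).trans (sub_le_self _ (hφ _))

lemma secures_extendRegion [Finite V] (hcol : ∀ v, G.col v = 1 ∨ G.col v = 2) {W : Set V}
    {g g' : V → V} (hg : G.Secures c g W) (hW : ∀ v ∈ W, G.isP1 v → g' v = g v)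
    (hsafe : ∀ v ∈ G.safeStates c W, G.isP1 v → G.KeepsCredit c W v (g' v))
    (hattr : ∀ v ∈ G.extendRegion c W, v ∉ G.safeStates c W ∪ W → G.isP1 v →
      g' v ∈ G.extendRegion c W ∧ attractorRank G.isP1 G.E (G.safeStates c W ∪ W) (g' v) <
        attractorRank G.isP1 G.E (G.safeStates c W ∪ W) v) :
    G.Secures c g' (G.extendRegion c W) := by
  intro ρ T hplay hT hcons
  by_cases hvisit : ∃ t, T ≤ t ∧ ρ t ∈ W
  · obtain ⟨t, ht, htW⟩ := hvisit
    refine hg ρ t hplay htW fun t' ht' hW' h1 => ?_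
    rw [hcons t' (by omega) (subset_attractor (Or.inr hW')) h1, hW _ hW' h1]
  push Not at hvisit
  have hkeep : ∀ t, T ≤ t → ρ t ∈ G.safeStates c W → ρ (t + 1) ∈ G.safeStates c W ∧
      G.minCredit c W (ρ (t + 1)) ≤ G.minCredit c W (ρ t) + (G.w (ρ t) (ρ (t + 1)) - c) := by
    intro t ht hs
    have hk : G.KeepsCredit c W (ρ t) (ρ (t + 1)) := by
      by_cases h1 : G.isP1 (ρ t)
      · rw [hcons t ht (subset_attractor (Or.inl hs)) h1]
        exact hsafe _ hs h1
      · exact keepsCredit_of_move hs h1 (hplay t)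
    exact hk.resolve_left (hvisit (t + 1) (by omega))
  obtain ⟨t₁, ht₁, hs₁⟩ : ∃ t₁, T ≤ t₁ ∧ ρ t₁ ∈ G.safeStates c W := by
    refine exists_ge_mem_of_rank_decreasing
      (attractorRank G.isP1 G.E (G.safeStates c W ∪ W)) ρ hT fun t ht hA hs => ?_
    have hnT : ρ t ∉ G.safeStates c W ∪ W := fun h => h.elim hs (hvisit t ht)
    by_cases h1 : G.isP1 (ρ t)
    · rw [hcons t ht hA h1]
      exact hattr _ hA hnT h1
    · exact attractorRank_lt_of_move hA hnT h1 (hplay t)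
  have hsafeFrom : ∀ t, t₁ ≤ t → ρ t ∈ G.safeStates c W :=
    Nat.le_induction hs₁ fun t ht hs => (hkeep t (by omega) hs).1
  refine G.le_payoff_of_eventually_le_energy (K := G.energy c ρ t₁ - G.minCredit c W (ρ t₁))
    (eventually_atTop.mpr ⟨t₁, fun t ht => col_eq_two_of_mem_safeStates hcol (hsafeFrom t ht)⟩)
    (eventually_atTop.mpr ⟨t₁, energy_sub_le_energy_of_potential minCredit_nonneg
      fun t ht => (hkeep t (by omega) (hsafeFrom t ht)).2⟩)

end

section

variable {V : Type} {G : Game V} {c : ℝ}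

lemma exists_secures_extendRegion [Finite V] (hsucc : ∀ v, ∃ u, G.E v u)
    (hcol : ∀ v, G.col v = 1 ∨ G.col v = 2) {W : Set V} {g : G.Positional}
    (hg : G.Secures c g.1 W) : ∃ g' : G.Positional, G.Secures c g'.1 (G.extendRegion c W) := by
  set rank := attractorRank G.isP1 G.E (G.safeStates c W ∪ W)
  have hmove : ∀ v, ∃ u, G.isP1 v → G.E v u ∧ (v ∈ W → u = g.1 v) ∧
      (v ∈ G.safeStates c W → G.KeepsCredit c W v u) ∧
      (v ∈ G.extendRegion c W → v ∉ G.safeStates c W ∪ W →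
        u ∈ G.extendRegion c W ∧ rank u < rank v) := by
    intro v
    by_cases h1 : G.isP1 v
    swap
    · exact ⟨v, fun h => absurd h h1⟩
    by_cases hW : v ∈ W
    · exact ⟨g.1 v, fun _ => ⟨g.2 v h1, fun _ => rfl, fun hs => absurd hW hs.1,
        fun _ hn => absurd (Or.inr hW) hn⟩⟩
    by_cases hs : v ∈ G.safeStates c W
    · obtain ⟨u, hE, hk⟩ := exists_move_keepsCredit hsucc hs h1
      exact ⟨u, fun _ => ⟨hE, fun h => absurd h hW, fun _ => hk, fun _ hn => absurd (Or.inl hs) hn⟩⟩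
    by_cases hA : v ∈ G.extendRegion c W
    · obtain ⟨u, hE, hu, hlt⟩ :=
        exists_move_attractorRank_lt hA (fun h => h.elim hs hW) h1
      exact ⟨u, fun _ => ⟨hE, fun h => absurd h hW, fun h => absurd h hs, fun _ _ => ⟨hu, hlt⟩⟩⟩
    · exact ⟨g.1 v, fun _ => ⟨g.2 v h1, fun h => absurd h hW, fun h => absurd h hs,
        fun h => absurd h hA⟩⟩
  choose g' hg' using hmove
  exact ⟨⟨g', fun v h1 => (hg' v h1).1⟩, secures_extendRegion hcol hg
    (fun v hv h1 => (hg' v h1).2.1 hv) (fun v hv h1 => (hg' v h1).2.2.1 hv)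
    fun v hv hn h1 => (hg' v h1).2.2.2 hv hn⟩

lemma exists_secures_region [Finite V] (hsucc : ∀ v, ∃ u, G.E v u)
    (hcol : ∀ v, G.col v = 1 ∨ G.col v = 2) (n : ℕ) :
    ∃ g : G.Positional, G.Secures c g.1 (G.region c n) := by
  induction n with
  | zero =>
    obtain ⟨g⟩ := G.nonempty_positional hsucc
    exact ⟨g, fun _ _ _ h => absurd h (Set.notMem_empty _)⟩
  | succ n ih =>
    obtain ⟨g, hg⟩ := ih
    exact exists_secures_extendRegion hsucc hcol hg

lemma region_mono : Monotone (G.region c) :=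
  monotone_nat_of_le_succ fun _ _ hv => subset_attractor (Or.inr hv)

lemma exists_extendRegion_region_subset [Finite V] :
    ∃ n, G.extendRegion c (G.region c n) ⊆ G.region c n := by
  obtain ⟨n, hn⟩ := WellFoundedGT.monotone_chain_condition ⟨G.region c, region_mono⟩
  exact ⟨n, (hn (n + 1) n.le_succ).symm.le⟩

end

section

variable {V : Type} (G : Game V) (c : ℝ)

open scoped Classical in
/-- Carries the history, read by `σ`, and the energy, read by Player 2's choice `p2`. -/
noncomputable def counterplayAux (σ : Strat1 G) (p2 : V → ℝ → V) (q₀ : V) : ℕ → List V × V × ℝ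
  | 0 => ([], q₀, 0)
  | n + 1 =>
    let x := counterplayAux σ p2 q₀ n
    let u := if G.isP1 x.2.1 then σ.f x.1 x.2.1 else p2 x.2.1 x.2.2
    (x.1 ++ [x.2.1], u, x.2.2 + (G.w x.2.1 u - c))

noncomputable def counterplay (σ : Strat1 G) (p2 : V → ℝ → V) (q₀ : V) (n : ℕ) : V :=
  (G.counterplayAux c σ p2 q₀ n).2.1

variable {G c} {σ : Strat1 G} {p2 : V → ℝ → V} {q₀ : V}

lemma counterplayAux_fst (n : ℕ) :
    (G.counterplayAux c σ p2 q₀ n).1 = List.ofFn fun i : Fin n => G.counterplay c σ p2 q₀ i := by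
  induction n with
  | zero => rfl
  | succ n ih =>
    change (G.counterplayAux c σ p2 q₀ n).1 ++ [G.counterplay c σ p2 q₀ n] = _
    rw [ih, List.ofFn_succ_last]
    rfl

lemma counterplayAux_snd_snd (n : ℕ) :
    (G.counterplayAux c σ p2 q₀ n).2.2 = G.energy c (G.counterplay c σ p2 q₀) n := by
  induction n with
  | zero => rfl
  | succ n ih =>
    change (G.counterplayAux c σ p2 q₀ n).2.2 +
      (G.w (G.counterplay c σ p2 q₀ n) (G.counterplay c σ p2 q₀ (n + 1)) - c) = _
    rw [ih, energy_succ]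

open scoped Classical in
lemma counterplay_succ (n : ℕ) :
    G.counterplay c σ p2 q₀ (n + 1) = if G.isP1 (G.counterplay c σ p2 q₀ n) then
      σ.f (List.ofFn fun i : Fin n => G.counterplay c σ p2 q₀ i) (G.counterplay c σ p2 q₀ n)
    else p2 (G.counterplay c σ p2 q₀ n) (G.energy c (G.counterplay c σ p2 q₀) n) := by
  rw [← counterplayAux_fst, ← counterplayAux_snd_snd]
  rfl

lemma consistent1_counterplay : Consistent1 G σ (G.counterplay c σ p2 q₀) := fun n h1 => by
  rw [counterplay_succ, if_pos h1]

end

section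

variable {V : Type} {G : Game V} {c : ℝ} {W : Set V}

lemma mem_energyAttractor_of_notMem (hW : G.extendRegion c W ⊆ W) {v : V} (hv : v ∉ W)
    (e : ℝ) : (v, e) ∈ G.energyAttractor c W := by
  by_contra h
  exact hv (hW (subset_attractor (Or.inl ⟨hv, e, h⟩)))

lemma exists_move_notMem_energyRank_lt (hsucc : ∀ v, ∃ u, G.E v u)
    (hW : G.extendRegion c W ⊆ W) {v : V} (hv : v ∉ W) (h1 : ¬ G.isP1 v) (e : ℝ) :
    ∃ u, G.E v u ∧ u ∉ W ∧
      ((v, e) ∉ G.lossConfigs →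
        G.energyRank c W (u, e + (G.w v u - c)) < G.energyRank c W (v, e)) := by
  by_cases hloss : (v, e) ∈ G.lossConfigs
  · obtain ⟨u, hE, hu⟩ :=
      exists_move_notMem_of_attractor_subset Set.subset_union_right hW hv h1 (hsucc v)
    exact ⟨u, hE, hu, fun h => absurd hloss h⟩
  · obtain ⟨⟨u, f⟩, ⟨-, hE, hu, hf⟩, -, hlt⟩ :=
      exists_move_attractorRank_lt (mem_energyAttractor_of_notMem hW hv e) hloss h1
    simp only at hf
    subst hf
    exact ⟨u, hE, hu h1, fun _ => hlt⟩

lemma exists_play_payoff_le [Finite V] (hsucc : ∀ v, ∃ u, G.E v u)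
    (hcol : ∀ v, G.col v = 1 ∨ G.col v = 2) (hW : G.extendRegion c W ⊆ W) {q₀ : V} (hq : q₀ ∉ W)
    (σ : Strat1 G) :
    ∃ ρ, IsPlay G ρ ∧ ρ 0 = q₀ ∧ Consistent1 G σ ρ ∧ payoff G ρ ≤ c := by
  choose! p2 hp2E hp2W hp2rank using
    fun v (hv : v ∉ W) h1 e => exists_move_notMem_energyRank_lt hsucc hW hv h1 e
  have h0 : G.counterplay c σ p2 q₀ 0 = q₀ := rfl
  have hcons : Consistent1 G σ (G.counterplay c σ p2 q₀) := consistent1_counterplay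
  have hnext := counterplay_succ (G := G) (c := c) (σ := σ) (p2 := p2) (q₀ := q₀)
  generalize G.counterplay c σ p2 q₀ = ρ at h0 hcons hnext
  have hstep : ∀ n, ρ n ∉ W → G.E (ρ n) (ρ (n + 1)) ∧ ρ (n + 1) ∉ W := by
    intro n hn
    rw [hnext]
    split_ifs with h1
    · exact ⟨σ.valid _ _ h1,
        notMem_of_move_of_attractor_subset Set.subset_union_right hW hn h1 (σ.valid _ _ h1)⟩
    · exact ⟨hp2E _ hn h1 _, hp2W _ hn h1 _⟩
  have hout : ∀ n, ρ n ∉ W := fun n => Nat.rec (h0 ▸ hq) (fun n hn => (hstep n hn).2) n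
  have hall : ∀ n, (ρ n, G.energy c ρ n) ∈ G.energyAttractor c W :=
    fun n => mem_energyAttractor_of_notMem hW (hout n) _
  have hloss : ∃ᶠ n in atTop, (ρ n, G.energy c ρ n) ∈ G.lossConfigs := by
    refine frequently_atTop.mpr fun n₀ => exists_ge_mem_of_rank_decreasing (G.energyRank c W)
      (fun n => (ρ n, G.energy c ρ n)) (hall n₀) fun t _ _ hnot => ⟨hall (t + 1), ?_⟩
    by_cases h1 : G.isP1 (ρ t)
    · exact (attractorRank_lt_of_move (hall t) hnot (not_not.mpr h1)
        ⟨hout t, (hstep t (hout t)).1, fun h => absurd h1 h, G.energy_succ c ρ t⟩).2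
    · have hp2 : ρ (t + 1) = p2 (ρ t) (G.energy c ρ t) := by
        rw [hnext, if_neg h1]
      rw [energy_succ, hp2]
      exact hp2rank _ (hout t) h1 _ hnot
  exact ⟨ρ, fun n => (hstep n (hout n)).1, h0, hcons,
    payoff_le_of_frequently G hcol hloss⟩

theorem exists_positional_ge_or_forall_val1_le [Finite V] (hsucc : ∀ v, ∃ u, G.E v u)
    (hcol : ∀ v, G.col v = 1 ∨ G.col v = 2) (c : ℝ) (q₀ : V) :
    (∃ g : G.Positional, (c : EReal) ≤ val1 G g.toStrat1 q₀) ∨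
      ∀ σ : Strat1 G, val1 G σ q₀ ≤ c := by
  obtain ⟨n, hn⟩ := G.exists_extendRegion_region_subset (c := c)
  by_cases hq : q₀ ∈ G.region c n
  · obtain ⟨g, hg⟩ := exists_secures_region (c := c) hsucc hcol n
    exact Or.inl ⟨g, le_iInf fun ρ =>
      hg ρ.1 0 ρ.2.1 (by rw [ρ.2.2.1]; exact hq) fun t _ _ h1 => ρ.2.2.2 t h1⟩
  · refine Or.inr fun σ => ?_
    obtain ⟨ρ, hplay, h0, hcons, hle⟩ := exists_play_payoff_le hsucc hcol hn hq σ
    exact (iInf_le (fun ρ : {ρ // IsPlay G ρ ∧ ρ 0 = q₀ ∧ Consistent1 G σ ρ} => payoff G ρ.1)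
      ⟨ρ, hplay, h0, hcons⟩).trans hle

end

end Game

/-- in a mean-payoff co-Büchi game (priorities in {1,2}),
Player 1 has a memoryless optimal strategy from every state. -/
theorem coBuchi_memoryless_optimal {V : Type} [Fintype V] (G : Game V)
    (hsucc : ∀ v, ∃ u, G.E v u)
    (hcol : ∀ v, G.col v = 1 ∨ G.col v = 2) (q₀ : V) :
    ∃ σ : Strat1 G, Memoryless1 σ ∧ val1 G σ q₀ = lowVal G q₀ := by
  have := G.nonempty_positional hsucc
  obtain ⟨g, hg⟩ := Finite.exists_max fun g : G.Positional => val1 G g.toStrat1 q₀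
  refine ⟨g.toStrat1, g.memoryless, le_antisymm (le_iSup (fun σ => val1 G σ q₀) _) ?_⟩
  by_contra! hlt
  obtain ⟨c, hgc, hc⟩ := EReal.exists_between_coe_real hlt
  rcases Game.exists_positional_ge_or_forall_val1_le hsucc hcol c q₀ with ⟨g', hg'⟩ | hall
  · exact (hgc.trans_le hg').not_ge (hg g')
  · exact hc.not_ge (iSup_le hall)
end

section
/- Let G be a strongly connected finite weighted graph (all vertices Player 1's), let q be a vertex with even priority p = min col(G), and let w be the maximum average weight over cycles of G. Then there is a strategy for Player 1 (playing rounds: reach q, then follow a maximum-mean cycle for i steps in round i) whose unique induced play ρ satisfies: q ∈ Inf(ρ), the parity condition holds, and liminf_n payoff_n(ρ) = w. -/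
open Filter

variable {V : Type}

/-!
Fix a cycle `c` of mean weight `w`, paths from every state to `c 0`, and a path from `c 0` to `q`.
In its `k`-th round the play goes to the cycle, around it `k + 1` times and on to `q`. The cycle
contributes exactly `w` per step, so each round's weight differs from `w` times its length by a
bounded amount; after `k` rounds the play has length of order `k²` while the accumulated error is
of order `k`, so the averages tend to `w`. Since `q` is visited at the end of every round and has
the least priority, which is even, the parity condition holds.
-/

open Finset Topology

section Blocks

variable (ℓ : ℕ → ℕ)

def blockStart (k : ℕ) : ℕ := ∑ m ∈ range k, ℓ m

/-- For positive block lengths `k ≤ blockStart ℓ k`, so the search bound `N` loses nothing. -/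
def blockIdx (N : ℕ) : ℕ := Nat.findGreatest (fun k => blockStart ℓ k ≤ N) N

variable {ℓ}

@[simp]
lemma blockStart_zero : blockStart ℓ 0 = 0 := sum_range_zero ℓ

lemma blockStart_succ (k : ℕ) : blockStart ℓ (k + 1) = blockStart ℓ k + ℓ k :=
  sum_range_succ ℓ k

lemma blockStart_mono : Monotone (blockStart ℓ) :=
  monotone_nat_of_le_succ fun k => by rw [blockStart_succ]; omega

lemma le_blockStart (hpos : ∀ k, 0 < ℓ k) (k : ℕ) : k ≤ blockStart ℓ k := by
  induction k with
  | zero => simp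
  | succ k ih => rw [blockStart_succ]; have := hpos k; omega

lemma mul_succ_le_two_mul_blockStart (hℓ : ∀ k, k + 1 ≤ ℓ k) (k : ℕ) :
    k * (k + 1) ≤ 2 * blockStart ℓ k := by
  induction k with
  | zero => simp
  | succ k ih => rw [blockStart_succ]; have := hℓ k; nlinarith

lemma blockStart_blockIdx_le (N : ℕ) : blockStart ℓ (blockIdx ℓ N) ≤ N :=
  Nat.findGreatest_spec (P := fun k => blockStart ℓ k ≤ N) N.zero_le (by simp)

lemma sub_blockStart_blockIdx_lt (hpos : ∀ k, 0 < ℓ k) (N : ℕ) :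
    N - blockStart ℓ (blockIdx ℓ N) < ℓ (blockIdx ℓ N) := by
  suffices h : N < blockStart ℓ (blockIdx ℓ N + 1) by
    have := blockStart_blockIdx_le (ℓ := ℓ) N
    rw [blockStart_succ] at h
    omega
  by_contra! h
  exact Nat.findGreatest_is_greatest (Nat.lt_succ_self _) ((le_blockStart hpos _).trans h) h

lemma blockIdx_blockStart_add (hpos : ∀ k, 0 < ℓ k) {k j : ℕ} (hj : j < ℓ k) :
    blockIdx ℓ (blockStart ℓ k + j) = k := by
  have h₁ := blockStart_blockIdx_le (ℓ := ℓ) (blockStart ℓ k + j)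
  have h₂ := sub_blockStart_blockIdx_lt hpos (blockStart ℓ k + j)
  rcases lt_trichotomy (blockIdx ℓ (blockStart ℓ k + j)) k with h | h | h
  · have := blockStart_mono (ℓ := ℓ) h
    rw [blockStart_succ] at this
    omega
  · exact h
  · have := blockStart_mono (ℓ := ℓ) h
    rw [blockStart_succ] at this
    omega

lemma tendsto_blockIdx (hpos : ∀ k, 0 < ℓ k) : Tendsto (blockIdx ℓ) atTop atTop :=
  tendsto_atTop_atTop.2 fun k =>
    ⟨blockStart ℓ k, fun _ hN => Nat.le_findGreatest ((le_blockStart hpos k).trans hN) hN⟩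

lemma sum_range_blockStart {M : Type*} [AddCommMonoid M] (y : ℕ → M) (k : ℕ) :
    ∑ i ∈ range (blockStart ℓ k), y i =
      ∑ m ∈ range k, ∑ j ∈ range (ℓ m), y (blockStart ℓ m + j) := by
  induction k with
  | zero => simp
  | succ k ih => rw [blockStart_succ, sum_range_add, ih, sum_range_succ]

variable {y : ℕ → ℝ} {M D : ℝ}

lemma abs_sum_range_blockStart_add_le {a k j : ℕ} (hℓa : ∀ k, ℓ k ≤ a * (k + 1))
    (hM : ∀ i, |y i| ≤ M)
    (hD : ∀ k, |∑ j ∈ range (ℓ k), y (blockStart ℓ k + j)| ≤ D) (hj : j < ℓ k) :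
    |∑ i ∈ range (blockStart ℓ k + j), y i| ≤ (D + a * M) * (k + 1) := by
  have hfull : |∑ i ∈ range (blockStart ℓ k), y i| ≤ k * D := by
    rw [sum_range_blockStart]
    refine (abs_sum_le_sum_abs _ _).trans ?_
    simpa using sum_le_sum fun m (_ : m ∈ range k) => hD m
  have hpart : |∑ i ∈ range j, y (blockStart ℓ k + i)| ≤ a * (k + 1) * M := by
    refine (abs_sum_le_sum_abs _ _).trans ((sum_le_sum fun i _ => hM _).trans ?_)
    have : (j : ℝ) ≤ a * (k + 1) := by exact_mod_cast hj.le.trans (hℓa k)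
    simpa using mul_le_mul_of_nonneg_right this ((abs_nonneg _).trans (hM 0))
  have hD0 : 0 ≤ D := (abs_nonneg _).trans (hD 0)
  rw [sum_range_add]
  calc _ ≤ k * D + a * (k + 1) * M := (abs_add_le _ _).trans (add_le_add hfull hpart)
    _ ≤ _ := by nlinarith

theorem tendsto_sum_div_of_blocks {a : ℕ} (hℓ : ∀ k, k + 1 ≤ ℓ k)
    (hℓa : ∀ k, ℓ k ≤ a * (k + 1)) (hM : ∀ i, |y i| ≤ M)
    (hD : ∀ k, |∑ j ∈ range (ℓ k), y (blockStart ℓ k + j)| ≤ D) :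
    Tendsto (fun N => (∑ i ∈ range N, y i) / N) atTop (𝓝 0) := by
  have hpos : ∀ k, 0 < ℓ k := fun k => (hℓ k).trans_lt' k.succ_pos
  set C := D + a * M
  have hC : 0 ≤ C := add_nonneg ((abs_nonneg _).trans (hD 0))
    (mul_nonneg a.cast_nonneg ((abs_nonneg _).trans (hM 0)))
  have hidx := tendsto_blockIdx hpos
  have hbound : ∀ᶠ N in atTop, |(∑ i ∈ range N, y i) / N| ≤ 2 * C / blockIdx ℓ N := by
    filter_upwards [hidx.eventually_ge_atTop 1] with N hk
    have hgrowth : ((blockIdx ℓ N : ℕ) : ℝ) * (blockIdx ℓ N + 1) ≤ 2 * N := by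
      exact_mod_cast (mul_succ_le_two_mul_blockStart hℓ _).trans
        (Nat.mul_le_mul_left 2 (blockStart_blockIdx_le N))
    have hk' : (1 : ℝ) ≤ blockIdx ℓ N := by exact_mod_cast hk
    have hS := abs_sum_range_blockStart_add_le hℓa hM hD (sub_blockStart_blockIdx_lt hpos N)
    rw [Nat.add_sub_cancel' (blockStart_blockIdx_le N)] at hS
    have hN : (0 : ℝ) < N := by nlinarith
    rw [abs_div, Nat.abs_cast, div_le_div_iff₀ hN (by linarith)]
    nlinarith
  exact squeeze_zero_norm' hbound ((tendsto_const_div_atTop_nhds_zero_nat _).comp hidx)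

end Blocks

structure FinPath {α : Type*} (r : α → α → Prop) (a b : α) where
  len : ℕ
  f : ℕ → α
  f_zero : f 0 = a
  f_len : f len = b
  rel : ∀ i < len, r (f i) (f (i + 1))

namespace FinPath

variable {α : Type*} {r : α → α → Prop} {a b c : α}

lemma nonempty_of_reflTransGen (h : Relation.ReflTransGen r a b) : Nonempty (FinPath r a b) := by
  induction h with
  | refl => exact ⟨⟨0, fun _ => a, rfl, rfl, by simp⟩⟩
  | @tail b c _ hbc ih =>
    obtain ⟨p⟩ := ih
    refine ⟨⟨p.len + 1, fun i => if i ≤ p.len then p.f i else c, by simp [p.f_zero], by simp,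
      fun i hi => ?_⟩⟩
    rcases (Nat.lt_succ_iff.1 hi).lt_or_eq with hi | rfl
    · simpa [hi.le, Nat.succ_le_of_lt hi] using p.rel i hi
    · simpa [p.f_len] using hbc

def comp (p : FinPath r a b) (q : FinPath r b c) : FinPath r a c where
  len := p.len + q.len
  f i := if i < p.len then p.f i else q.f (i - p.len)
  f_zero := by
    split_ifs with h
    · exact p.f_zero
    · rw [Nat.zero_sub, q.f_zero, ← p.f_len, Nat.eq_zero_of_not_pos h, p.f_zero]
  f_len := by simp [q.f_len]
  rel i hi := by
    show r (if i < p.len then _ else _) (if i + 1 < p.len then _ else _)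
    by_cases hp : i < p.len
    · rw [if_pos hp]
      rcases (Nat.succ_le_of_lt hp).lt_or_eq with hp' | hp'
      · rw [if_pos hp']
        exact p.rel i hp
      · have := p.rel i hp
        rw [if_neg hp'.not_lt, ← hp', Nat.sub_self, q.f_zero]
        rwa [show i + 1 = p.len from hp', p.f_len] at this
    · rw [if_neg hp, if_neg (by omega), (by omega : i + 1 - p.len = i - p.len + 1)]
      exact q.rel _ (by omega)

lemma comp_f_of_le (p : FinPath r a b) (q : FinPath r b c) {i : ℕ} (hi : i ≤ p.len) :
    (p.comp q).f i = p.f i := by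
  rcases hi.lt_or_eq with hi | rfl
  · exact if_pos hi
  · exact (if_neg (lt_irrefl _)).trans (by rw [Nat.sub_self, q.f_zero, p.f_len])

lemma comp_f_add (p : FinPath r a b) (q : FinPath r b c) (j : ℕ) :
    (p.comp q).f (p.len + j) = q.f j :=
  (if_neg (by omega)).trans (by rw [Nat.add_sub_cancel_left])

section Excess

variable (wt : α → α → ℝ) (x : ℝ)

def excess (p : FinPath r a b) : ℝ := ∑ i ∈ range p.len, (wt (p.f i) (p.f (i + 1)) - x)

lemma excess_comp (p : FinPath r a b) (q : FinPath r b c) :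
    (p.comp q).excess wt x = p.excess wt x + q.excess wt x := by
  rw [excess, show (p.comp q).len = p.len + q.len from rfl, sum_range_add]
  congr 1
  · refine sum_congr rfl fun i hi => ?_
    rw [comp_f_of_le _ _ (mem_range.1 hi).le, comp_f_of_le _ _ (mem_range.1 hi)]
  · refine sum_congr rfl fun j _ => ?_
    rw [comp_f_add, add_assoc, comp_f_add]

variable {wt x} {M : ℝ}

lemma abs_excess_le (hM : ∀ u v, |wt u v - x| ≤ M) (p : FinPath r a b) :
    |p.excess wt x| ≤ p.len * M :=
  (abs_sum_le_sum_abs _ _).trans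
    (by simpa using sum_le_sum fun i (_ : i ∈ range p.len) => hM _ _)

end Excess

def ofPeriodic {n : ℕ} {c : ℕ → α} (hc : ∀ i, r (c i) (c (i + 1)))
    (hper : Function.Periodic c n) (m : ℕ) : FinPath r (c 0) (c 0) where
  len := m * n
  f := c
  f_zero := rfl
  f_len := by simpa using hper.nat_mul m 0
  rel i _ := hc i

lemma excess_ofPeriodic {n : ℕ} {c : ℕ → α} (hc : ∀ i, r (c i) (c (i + 1)))
    (hper : Function.Periodic c n) {wt : α → α → ℝ} {x : ℝ}
    (h : ∑ i ∈ range n, (wt (c i) (c (i + 1)) - x) = 0) (m : ℕ) :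
    (ofPeriodic hc hper m).excess wt x = 0 := by
  induction m with
  | zero => simp [excess, ofPeriodic]
  | succ m ih =>
    simp only [excess, ofPeriodic] at ih ⊢
    rw [add_mul, one_mul, sum_range_add, ih, zero_add, ← h]
    have hm : Function.Periodic c (m * n) := by simpa using hper.nat_mul m
    refine sum_congr rfl fun i _ => ?_
    rw [add_comm (m * n) i, add_right_comm, hm, hm]

section Glue

variable {s t : ℕ → α} (b : ∀ k, FinPath r (s k) (t k))

def glue (N : ℕ) : α :=
  (b (blockIdx (fun k => (b k).len) N)).f
    (N - blockStart (fun k => (b k).len) (blockIdx (fun k => (b k).len) N))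

variable {b}

lemma glue_blockStart_add (hpos : ∀ k, 0 < (b k).len) (hlink : ∀ k, t k = s (k + 1)) {k j : ℕ}
    (hj : j ≤ (b k).len) : glue b (blockStart (fun k => (b k).len) k + j) = (b k).f j := by
  rcases hj.lt_or_eq with hj | rfl
  · rw [glue, blockIdx_blockStart_add hpos hj, Nat.add_sub_cancel_left]
  · calc glue b (blockStart (fun k => (b k).len) k + (b k).len)
        = glue b (blockStart (fun k => (b k).len) (k + 1) + 0) := by
          rw [blockStart_succ, add_zero]
      _ = (b (k + 1)).f 0 := by
        rw [glue, blockIdx_blockStart_add hpos (hpos (k + 1)), Nat.add_sub_cancel_left]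
      _ = (b k).f (b k).len := by rw [(b (k + 1)).f_zero, (b k).f_len, hlink]

lemma glue_blockStart (hpos : ∀ k, 0 < (b k).len) (hlink : ∀ k, t k = s (k + 1)) (k : ℕ) :
    glue b (blockStart (fun k => (b k).len) k) = s k := by
  simpa [(b k).f_zero] using glue_blockStart_add hpos hlink (Nat.zero_le (b k).len)

lemma glue_rel (hpos : ∀ k, 0 < (b k).len) (hlink : ∀ k, t k = s (k + 1)) (N : ℕ) :
    r (glue b N) (glue b (N + 1)) := by
  obtain ⟨k, j, hj, rfl⟩ :
      ∃ k j, j < (b k).len ∧ blockStart (fun k => (b k).len) k + j = N :=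
    ⟨_, _, sub_blockStart_blockIdx_lt hpos N, Nat.add_sub_cancel' (blockStart_blockIdx_le N)⟩
  rw [add_assoc, glue_blockStart_add hpos hlink hj.le, glue_blockStart_add hpos hlink hj]
  exact (b k).rel j hj

lemma sum_glue_blockStart_add (hpos : ∀ k, 0 < (b k).len) (hlink : ∀ k, t k = s (k + 1))
    (wt : α → α → ℝ) (x : ℝ) (k : ℕ) :
    ∑ j ∈ range (b k).len, (wt (glue b (blockStart (fun k => (b k).len) k + j))
      (glue b (blockStart (fun k => (b k).len) k + j + 1)) - x) = (b k).excess wt x := by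
  refine sum_congr rfl fun j hj => ?_
  rw [add_assoc, glue_blockStart_add hpos hlink (mem_range.1 hj).le,
    glue_blockStart_add hpos hlink (mem_range.1 hj)]

end Glue

end FinPath

lemma tendsto_sum_div_of_sub {z : ℕ → ℝ} {x : ℝ}
    (h : Tendsto (fun N => (∑ i ∈ range N, (z i - x)) / N) atTop (𝓝 0)) :
    Tendsto (fun N => (∑ i ∈ range N, z i) / N) atTop (𝓝 x) := by
  refine (zero_add x ▸ h.add_const x).congr' ?_
  filter_upwards [eventually_ne_atTop 0] with N hN
  rw [sum_sub_distrib, sum_const, card_range, nsmul_eq_mul]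
  field_simp
  ring

open FinPath in
theorem exists_play_tendsto_avg {α : Type*} [Finite α] {r : α → α → Prop}
    (hsc : ∀ u v, Relation.ReflTransGen r u v) (wt : α → α → ℝ) {n : ℕ} (hn : 0 < n)
    {c : ℕ → α} (hc : ∀ i, r (c i) (c (i + 1))) (hper : Function.Periodic c n) {x : ℝ}
    (hcx : ∑ i ∈ range n, (wt (c i) (c (i + 1)) - x) = 0) (q₀ q : α) :
    ∃ ρ : ℕ → α, (∀ N, r (ρ N) (ρ (N + 1))) ∧ ρ 0 = q₀ ∧
      (∃ᶠ N in atTop, ρ N = q) ∧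
      Tendsto (fun N => (∑ i ∈ range N, wt (ρ i) (ρ (i + 1))) / N) atTop (𝓝 x) := by
  obtain ⟨π⟩ : Nonempty (∀ u, FinPath r u (c 0)) :=
    ⟨fun u => (nonempty_of_reflTransGen (hsc u (c 0))).some⟩
  obtain ⟨B⟩ := nonempty_of_reflTransGen (hsc (c 0) q)
  obtain ⟨L, hL⟩ := Finite.exists_le fun u => (π u).len
  obtain ⟨M, hM⟩ := Finite.exists_le fun e : α × α => |wt e.1 e.2 - x|
  have hM0 : 0 ≤ M := (abs_nonneg _).trans (hM (q, q))
  let s : ℕ → α := fun k => if k = 0 then q₀ else q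
  let b : ∀ k, FinPath r (s k) q := fun k =>
    (π (s k)).comp ((ofPeriodic hc hper (k + 1)).comp B)
  have hlen : ∀ k, (b k).len = (π (s k)).len + ((k + 1) * n + B.len) := fun k => rfl
  have hlink : ∀ k, q = s (k + 1) := fun k => (if_neg k.succ_ne_zero).symm
  have hℓ : ∀ k, k + 1 ≤ (b k).len := fun k => by rw [hlen]; nlinarith
  have hpos : ∀ k, 0 < (b k).len := fun k => (hℓ k).trans_lt' k.succ_pos
  have hexcess : ∀ k, |(b k).excess wt x| ≤ (L + B.len) * M := fun k => by
    rw [excess_comp, excess_comp, excess_ofPeriodic hc hper hcx, zero_add]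
    have hπ : ((π (s k)).len : ℝ) ≤ L := by exact_mod_cast hL (s k)
    have hstep : ∀ u v, |wt u v - x| ≤ M := fun u v => hM (u, v)
    calc _ ≤ (π (s k)).len * M + B.len * M :=
          (abs_add_le _ _).trans (add_le_add (abs_excess_le hstep _) (abs_excess_le hstep _))
      _ ≤ (L + B.len) * M := by nlinarith
  refine ⟨glue b, glue_rel hpos hlink, glue_blockStart hpos hlink 0, ?_, ?_⟩
  · have hT : Tendsto (fun k => blockStart (fun k => (b k).len) (k + 1)) atTop atTop :=
      tendsto_atTop_mono (fun k => k.le_succ.trans (le_blockStart hpos _)) tendsto_id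
    exact hT.frequently
      (Frequently.of_forall fun k => (glue_blockStart hpos hlink _).trans (hlink k).symm)
  · refine tendsto_sum_div_of_sub (tendsto_sum_div_of_blocks (a := L + n + B.len)
      (D := (L + B.len) * M) hℓ (fun k => by rw [hlen]; nlinarith [hL (s k)])
      (fun i => hM (_, _)) fun k => ?_)
    rw [sum_glue_blockStart_add hpos hlink]
    exact hexcess k

lemma parityWin_of_mem_infOcc {G : Game V} {ρ : ℕ → V} {q : V} (hq : q ∈ InfOcc ρ)
    (hmin : ∀ v, G.col q ≤ G.col v) (heven : Even (G.col q)) : ParityWin G ρ := by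
  have hleast : IsLeast (G.col '' InfOcc ρ) (G.col q) :=
    ⟨⟨q, hq, rfl⟩, by rintro _ ⟨v, -, rfl⟩; exact hmin v⟩
  rw [ParityWin, hleast.csInf_eq]
  exact heven

theorem strongly_connected_optimal_play_general {V : Type} [Fintype V] (G : Game V)
    (hsc : ∀ u v : V, Relation.ReflTransGen G.E u v)
    (q : V) (p : ℕ) (hq : G.col q = p) (hmin : ∀ v, p ≤ G.col v) (hp : Even p)
    (w : ℝ)
    (hcyc : ∃ n, 0 < n ∧ ∃ c : ℕ → V, (∀ i, G.E (c i) (c (i + 1))) ∧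
      (∀ i, c (i + n) = c i) ∧ (∑ i ∈ Finset.range n, G.w (c i) (c (i + 1))) / n = w)
    (q₀ : V) :
    ∃ ρ : ℕ → V, IsPlay G ρ ∧ ρ 0 = q₀ ∧ q ∈ InfOcc ρ ∧ ParityWin G ρ ∧
      Filter.liminf (fun n => ((avgW G ρ n : ℝ) : EReal)) atTop = (w : EReal) := by
  subst hq
  obtain ⟨n, hn, c, hc, hper, hcavg⟩ := hcyc
  have hcx : ∑ i ∈ range n, (G.w (c i) (c (i + 1)) - w) = 0 := by
    rw [sum_sub_distrib, sum_const, card_range, nsmul_eq_mul, ← hcavg]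
    field_simp
    ring
  obtain ⟨ρ, hρ, hρ0, hqρ, hlim⟩ := exists_play_tendsto_avg hsc G.w hn hc hper hcx q₀ q
  exact ⟨ρ, hρ, hρ0, hqρ, parityWin_of_mem_infOcc hqρ hmin hp,
    (EReal.tendsto_coe.2 hlim).liminf_eq⟩

/-- in a strongly connected weighted graph with minimal priority
p even, attained at a state q, and maximum cycle average weight w, from every
start state there is a play visiting q infinitely often, satisfying the parity
condition, whose liminf average weight equals w. -/
theorem strongly_connected_optimal_play {V : Type} [Fintype V] (G : Game V)
    (hsc : ∀ u v : V, Relation.ReflTransGen G.E u v)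
    (q : V) (p : ℕ) (hq : G.col q = p) (hmin : ∀ v, p ≤ G.col v) (hp : Even p)
    (w : ℝ)
    (hcyc : ∃ n, 0 < n ∧ ∃ c : ℕ → V, (∀ i, G.E (c i) (c (i + 1))) ∧
      (∀ i, c (i + n) = c i) ∧ (∑ i ∈ Finset.range n, G.w (c i) (c (i + 1))) / n = w)
    (hmax : ∀ n, 0 < n → ∀ c : ℕ → V, (∀ i, G.E (c i) (c (i + 1))) →
      (∀ i, c (i + n) = c i) → (∑ i ∈ Finset.range n, G.w (c i) (c (i + 1))) / n ≤ w)
    (q₀ : V) :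
    ∃ ρ : ℕ → V, IsPlay G ρ ∧ ρ 0 = q₀ ∧ q ∈ InfOcc ρ ∧ ParityWin G ρ ∧
      Filter.liminf (fun n => ((avgW G ρ n : ℝ) : EReal)) atTop = (w : EReal) :=
  strongly_connected_optimal_play_general G hsc q p hq hmin hp w hcyc q₀
end

section
/- Let (a_n) be a sequence produced by concatenating, for i = 1, 2, 3, …, a block of at most B real numbers each with absolute value ≤ W, followed by a block of exactly i numbers taken consecutively from a sequence (b_n) with liminf of Cesàro averages equal to w and |b_n| ≤ W. Then liminf_{n→∞} (1/n) Σ_{k<n} a_k = liminf_{n→∞} (1/n) Σ_{k<n} b_k = w. In other words, interspersing bounded-length bounded-value segments between increasingly long segments of a sequence does not change the liminf of its running averages. -/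
/-!
The partial sum of `a` up to a position in the `i`-th block differs from a partial sum of `b` of
almost the same length only by the interspersed terms met so far: at most `B (i + 1)` of them, each
bounded by `W`. As the position is at least `i (i + 1) / 2`, the two averages differ by
`O(W B / i)`. Matching positions of `a` with positions of `b` and vice versa, each liminf of
averages is therefore at most the other.
-/

open Filter Topology Finset

noncomputable def cesaroAvg (u : ℕ → ℝ) (n : ℕ) : ℝ := (∑ k ∈ range n, u k) / n

lemma abs_sum_range_le {u : ℕ → ℝ} {W : ℝ} {n : ℕ} (hu : ∀ k < n, |u k| ≤ W) :
    |∑ k ∈ range n, u k| ≤ W * n := by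
  calc |∑ k ∈ range n, u k| ≤ ∑ k ∈ range n, |u k| := abs_sum_le_sum_abs _ _
    _ ≤ ∑ _k ∈ range n, W := sum_le_sum fun k hk => hu k (mem_range.1 hk)
    _ = W * n := by simp [mul_comm]

lemma abs_cesaroAvg_le {u : ℕ → ℝ} {W : ℝ} (hu : ∀ k, |u k| ≤ W) (n : ℕ) :
    |cesaroAvg u n| ≤ W := by
  rcases n.eq_zero_or_pos with rfl | hn
  · simpa [cesaroAvg] using (abs_nonneg _).trans (hu 0)
  · have hn' : (0 : ℝ) < n := Nat.cast_pos.2 hn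
    rw [cesaroAvg, abs_div, Nat.abs_cast, div_le_iff₀ hn']
    exact abs_sum_range_le fun k _ => hu k

lemma abs_cesaroAvg_add_sub_le {u v : ℕ → ℝ} {W : ℝ} (hv : ∀ k, |v k| ≤ W) {m d : ℕ}
    (h : |∑ k ∈ range (m + d), u k - ∑ k ∈ range m, v k| ≤ W * d) :
    |cesaroAvg u (m + d) - cesaroAvg v m| ≤ 2 * W * d / (m + d) := by
  rcases Nat.eq_zero_or_pos (m + d) with hmd | hmd
  · obtain ⟨rfl, rfl⟩ : m = 0 ∧ d = 0 := by omega
    simp [cesaroAvg]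
  have hW : 0 ≤ W := (abs_nonneg _).trans (hv 0)
  have hn : (0 : ℝ) < m + d := by exact_mod_cast hmd
  set A := ∑ k ∈ range (m + d), u k
  set Bs := ∑ k ∈ range m, v k
  have hBs : |Bs| ≤ W * m := abs_sum_range_le fun k _ => hv k
  have hshift : |Bs / (m + d) - Bs / m| ≤ W * d / (m + d) := by
    rcases m.eq_zero_or_pos with rfl | hm
    · simp only [Bs, range_zero, sum_empty, zero_div, sub_zero, abs_zero]
      positivity
    have hm' : (0 : ℝ) < m := Nat.cast_pos.2 hm
    rw [div_sub_div _ _ hn.ne' hm'.ne', abs_div, abs_of_pos (mul_pos hn hm'),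
      div_le_div_iff₀ (mul_pos hn hm') hn]
    calc |Bs * m - (m + d) * Bs| * (m + d) = |Bs| * d * (m + d) := by
          rw [show Bs * m - (m + d) * Bs = -(Bs * d) by ring, abs_neg, abs_mul, Nat.abs_cast]
      _ ≤ W * m * d * (m + d) := by gcongr
      _ = W * d * ((m + d) * m) := by ring
  have hsplit : cesaroAvg u (m + d) - cesaroAvg v m =
      (A - Bs) / (m + d) + (Bs / (m + d) - Bs / m) := by
    simp only [cesaroAvg, A, Bs]; push_cast; ring
  calc |cesaroAvg u (m + d) - cesaroAvg v m|
      ≤ |A - Bs| / (m + d) + W * d / (m + d) := by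
        rw [hsplit, ← abs_of_pos hn, ← abs_div, abs_of_pos hn]
        exact (abs_add_le _ _).trans (add_le_add le_rfl hshift)
    _ ≤ W * d / (m + d) + W * d / (m + d) := by gcongr
    _ = 2 * W * d / (m + d) := by ring

lemma liminf_le_liminf_of_tendsto_sub_comp {ι κ : Type*} {l : Filter ι} [l.NeBot]
    {l' : Filter κ} {f : ι → ℝ} {g : κ → ℝ} {φ : ι → κ} {C : ℝ} (hg : ∀ k, |g k| ≤ C)
    (hφ : Tendsto φ l l') (hfg : Tendsto (fun x => f x - g (φ x)) l (𝓝 0)) :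
    liminf g l' ≤ liminf f l := by
  have hg_le {F : Filter κ} : IsBoundedUnder (· ≤ ·) F g :=
    isBoundedUnder_of ⟨C, fun k => le_of_abs_le (hg k)⟩
  have hg_ge {F : Filter κ} : IsBoundedUnder (· ≥ ·) F g :=
    isBoundedUnder_of ⟨-C, fun k => neg_le_of_abs_le (hg k)⟩
  have hgφ_le : IsBoundedUnder (· ≤ ·) l (g ∘ φ) :=
    isBoundedUnder_of ⟨C, fun x => le_of_abs_le (hg (φ x))⟩
  have hgφ_ge : IsBoundedUnder (· ≥ ·) l (g ∘ φ) :=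
    isBoundedUnder_of ⟨-C, fun x => neg_le_of_abs_le (hg (φ x))⟩
  calc liminf g l' ≤ liminf (g ∘ φ) l :=
        hφ.liminf_le_liminf_comp hg_le.isCoboundedUnder_ge hg_ge
    _ = liminf (g ∘ φ) l + liminf (fun x => f x - g (φ x)) l := by
        rw [hfg.liminf_eq, add_zero]
    _ ≤ liminf ((g ∘ φ) + fun x => f x - g (φ x)) l :=
        le_liminf_add hgφ_ge hgφ_le hfg.isBoundedUnder_ge
          hfg.isBoundedUnder_le.isCoboundedUnder_ge
    _ = liminf f l := by congr 1; ext x; simp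

lemma tendsto_zero_of_abs_le_div {ι : Type*} {l : Filter ι} {f : ι → ℝ} {i : ι → ℕ}
    (hi : Tendsto i l atTop) {C : ℝ} (h : ∀ x, 1 ≤ i x → |f x| ≤ C / i x) :
    Tendsto f l (𝓝 0) :=
  squeeze_zero_norm' ((hi.eventually_ge_atTop 1).mono h)
    ((tendsto_const_div_atTop_nhds_zero_nat C).comp hi)

lemma exists_le_and_lt_succ_of_strictMono {s : ℕ → ℕ} (hs : StrictMono s) (h0 : s 0 = 0)
    (n : ℕ) : ∃ i, s i ≤ n ∧ n < s (i + 1) := by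
  have hn : n ∈ Set.Ico (s 0) (s (n + 1)) :=
    ⟨h0.symm ▸ n.zero_le, n.lt_succ_self.trans_le (hs.id_le _)⟩
  obtain ⟨i, hsi, -, hlt⟩ := by simpa using Ico_subset_biUnion_Ico (n + 1) s hn
  exact ⟨i, hsi, hlt⟩

lemma exists_tendsto_index_of_strictMono {s : ℕ → ℕ} (hs : StrictMono s) (h0 : s 0 = 0) :
    ∃ i : ℕ → ℕ, Tendsto i atTop atTop ∧ ∀ n, s (i n) ≤ n ∧ n < s (i n + 1) := by
  choose i hi using exists_le_and_lt_succ_of_strictMono hs h0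
  refine ⟨i, tendsto_atTop_atTop.2 fun K => ⟨s K, fun n hn => ?_⟩, hi⟩
  by_contra! hlt
  exact (hi n).2.not_ge ((hs.monotone hlt).trans hn)

def triangle (i : ℕ) : ℕ := ∑ j ∈ range i, (j + 1)

lemma triangle_succ (i : ℕ) : triangle (i + 1) = triangle i + (i + 1) := sum_range_succ _ i

lemma two_mul_triangle (i : ℕ) : 2 * triangle i = i * (i + 1) := by
  induction i with
  | zero => rfl
  | succ n ih => rw [triangle_succ, mul_add, ih]; ring

lemma triangle_strictMono : StrictMono triangle :=
  strictMono_nat_of_lt_succ fun i => by rw [triangle_succ]; omega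

-- Blocks are numbered from `0`: block `i` consists of the `l i` interspersed terms, followed by
-- the terms of `b` with indices in `[triangle i, triangle (i + 1))`.
structure IsInterspersion (a b : ℕ → ℝ) (l S : ℕ → ℕ) : Prop where
  start_zero : S 0 = 0
  start_succ : ∀ i, S (i + 1) = S i + l i + (i + 1)
  apply_main : ∀ i, ∀ t < i + 1, a (S i + l i + t) = b (triangle i + t)

namespace IsInterspersion

variable {a b : ℕ → ℝ} {l S : ℕ → ℕ} {W : ℝ} {B : ℕ}

lemma start_eq (h : IsInterspersion a b l S) (i : ℕ) :
    S i = ∑ j ∈ range i, l j + triangle i := by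
  induction i with
  | zero => simp [h.start_zero, triangle]
  | succ n ih => rw [h.start_succ, ih, sum_range_succ, triangle_succ]; ring

lemma strictMono (h : IsInterspersion a b l S) : StrictMono S :=
  strictMono_nat_of_lt_succ fun i => by rw [h.start_succ]; omega

lemma sum_sub_sum_block (h : IsInterspersion a b l S) {i u : ℕ} (hu : u ≤ l i + (i + 1)) :
    ∑ k ∈ range (S i + u), a k - ∑ k ∈ range (triangle i + (u - l i)), b k =
      ∑ k ∈ range (S i), a k - ∑ k ∈ range (triangle i), b k +
        ∑ k ∈ range (min u (l i)), a (S i + k) := by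
  have hsplit := sum_range_add (fun k => a (S i + k)) (min u (l i)) (u - l i)
  rw [show min u (l i) + (u - l i) = u by omega] at hsplit
  have hmain : ∑ k ∈ range (u - l i), a (S i + (min u (l i) + k)) =
      ∑ k ∈ range (u - l i), b (triangle i + k) := by
    refine sum_congr rfl fun k hk => ?_
    rw [mem_range] at hk
    rw [show S i + (min u (l i) + k) = S i + l i + k by omega]
    exact h.apply_main i k (by omega)
  rw [sum_range_add, sum_range_add b, hsplit, hmain]
  ring

lemma sum_sub_sum_start (h : IsInterspersion a b l S) (i : ℕ) :
    ∑ k ∈ range (S i), a k - ∑ k ∈ range (triangle i), b k =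
      ∑ j ∈ range i, ∑ k ∈ range (l j), a (S j + k) := by
  induction i with
  | zero => simp [h.start_zero, triangle]
  | succ n ih =>
    have hblock := h.sum_sub_sum_block (i := n) (u := l n + (n + 1)) le_rfl
    rwa [← add_assoc, ← h.start_succ, Nat.add_sub_cancel_left, ← triangle_succ,
      min_eq_right (by omega), ih, ← sum_range_succ] at hblock

lemma abs_apply_le (h : IsInterspersion a b l S) (hb : ∀ n, |b n| ≤ W)
    (hjunk : ∀ i, ∀ t < l i, |a (S i + t)| ≤ W) (k : ℕ) : |a k| ≤ W := by
  obtain ⟨i, hik, hki⟩ := exists_le_and_lt_succ_of_strictMono h.strictMono h.start_zero k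
  rw [h.start_succ] at hki
  obtain ⟨t, rfl⟩ := Nat.exists_eq_add_of_le hik
  rcases lt_or_ge t (l i) with ht | ht
  · exact hjunk i t ht
  · obtain ⟨t, rfl⟩ := Nat.exists_eq_add_of_le ht
    rw [← add_assoc, h.apply_main i t (by omega)]
    exact hb _

lemma abs_sum_sub_sum_block_le (h : IsInterspersion a b l S)
    (hjunk : ∀ i, ∀ t < l i, |a (S i + t)| ≤ W) {i u : ℕ} (hu : u ≤ l i + (i + 1)) :
    |∑ k ∈ range (S i + u), a k - ∑ k ∈ range (triangle i + (u - l i)), b k| ≤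
      W * ↑(∑ j ∈ range i, l j + min u (l i)) := by
  rw [h.sum_sub_sum_block hu, h.sum_sub_sum_start]
  have hprev :
      |∑ j ∈ range i, ∑ k ∈ range (l j), a (S j + k)| ≤ W * ↑(∑ j ∈ range i, l j) := by
    rw [Nat.cast_sum, mul_sum]
    exact (abs_sum_le_sum_abs _ _).trans
      (sum_le_sum fun j _ => abs_sum_range_le fun t ht => hjunk j t ht)
  have hcur : |∑ k ∈ range (min u (l i)), a (S i + k)| ≤ W * ↑(min u (l i)) :=
    abs_sum_range_le fun t ht => hjunk i t (ht.trans_le (min_le_right _ _))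
  calc _ ≤ _ := abs_add_le _ _
    _ ≤ _ := add_le_add hprev hcur
    _ = _ := by push_cast; ring

lemma abs_cesaroAvg_sub_le_block (h : IsInterspersion a b l S) (hb : ∀ n, |b n| ≤ W)
    (hjunk : ∀ i, ∀ t < l i, |a (S i + t)| ≤ W) (hl : ∀ i, l i ≤ B) {i u : ℕ}
    (hu : u ≤ l i + (i + 1)) (hi : 1 ≤ i) :
    |cesaroAvg a (S i + u) - cesaroAvg b (triangle i + (u - l i))| ≤ 4 * W * B / i := by
  set m := triangle i + (u - l i)
  set d := ∑ j ∈ range i, l j + min u (l i)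
  have hn : S i + u = m + d := by rw [h.start_eq]; omega
  have hd : d ≤ B * (i + 1) := by
    have hsum := sum_le_card_nsmul (range i) l B fun j _ => hl j
    rw [card_range, smul_eq_mul] at hsum
    calc d ≤ i * B + B := add_le_add hsum ((min_le_right _ _).trans (hl i))
      _ = B * (i + 1) := by ring
  have htri : i * (i + 1) ≤ 2 * (m + d) := by have := two_mul_triangle i; omega
  have hW : 0 ≤ W := (abs_nonneg _).trans (hb 0)
  have hmd : (0 : ℝ) < m + d := by
    have him : i ≤ m := (triangle_strictMono.id_le i).trans (Nat.le_add_right _ _)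
    exact_mod_cast (show 0 < m + d by omega)
  have hd' : (d : ℝ) ≤ B * (i + 1) := by exact_mod_cast hd
  have htri' : (i : ℝ) * (i + 1) ≤ 2 * (m + d) := by exact_mod_cast htri
  have hsum := h.abs_sum_sub_sum_block_le hjunk hu
  rw [hn] at hsum ⊢
  refine (abs_cesaroAvg_add_sub_le hb hsum).trans ?_
  rw [div_le_div_iff₀ hmd (by exact_mod_cast hi)]
  calc 2 * W * d * i ≤ 2 * W * (B * (i + 1)) * i := by gcongr
    _ = 2 * W * B * (i * (i + 1)) := by ring
    _ ≤ 2 * W * B * (2 * (m + d)) := by gcongr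
    _ = 4 * W * B * (m + d) := by ring

lemma le_liminf_cesaroAvg (h : IsInterspersion a b l S) (hb : ∀ n, |b n| ≤ W)
    (hjunk : ∀ i, ∀ t < l i, |a (S i + t)| ≤ W) (hl : ∀ i, l i ≤ B) :
    liminf (cesaroAvg b) atTop ≤ liminf (cesaroAvg a) atTop := by
  obtain ⟨i, hi, hS⟩ := exists_tendsto_index_of_strictMono h.strictMono h.start_zero
  refine liminf_le_liminf_of_tendsto_sub_comp (abs_cesaroAvg_le hb)
    (φ := fun n => triangle (i n) + (n - S (i n) - l (i n))) ?_
    (tendsto_zero_of_abs_le_div (C := 4 * W * B) hi fun n hn => ?_)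
  · exact tendsto_atTop_mono
      (fun n => (triangle_strictMono.id_le _).trans (Nat.le_add_right _ _)) hi
  · have hu : n - S (i n) ≤ l (i n) + (i n + 1) := by
      have := (hS n).2
      rw [h.start_succ] at this
      omega
    have := h.abs_cesaroAvg_sub_le_block hb hjunk hl hu hn
    rwa [Nat.add_sub_cancel' (hS n).1] at this

lemma liminf_cesaroAvg_le (h : IsInterspersion a b l S) (hb : ∀ n, |b n| ≤ W)
    (hjunk : ∀ i, ∀ t < l i, |a (S i + t)| ≤ W) (hl : ∀ i, l i ≤ B) :
    liminf (cesaroAvg a) atTop ≤ liminf (cesaroAvg b) atTop := by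
  obtain ⟨j, hj, hT⟩ := exists_tendsto_index_of_strictMono triangle_strictMono rfl
  refine liminf_le_liminf_of_tendsto_sub_comp (abs_cesaroAvg_le (h.abs_apply_le hb hjunk))
    (φ := fun m => S (j m) + (l (j m) + (m - triangle (j m)))) ?_
    (tendsto_zero_of_abs_le_div (C := 4 * W * B) hj fun m hm => ?_)
  · refine tendsto_atTop_mono (fun m => ?_) tendsto_id
    have := h.start_eq (j m)
    have := (hT m).1
    simp only [id]
    omega
  · have hu : l (j m) + (m - triangle (j m)) ≤ l (j m) + (j m + 1) := by
      have := (hT m).2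
      rw [triangle_succ] at this
      omega
    have := h.abs_cesaroAvg_sub_le_block hb hjunk hl hu hm
    rwa [Nat.add_sub_cancel_left, Nat.add_sub_cancel' (hT m).1, abs_sub_comm] at this

end IsInterspersion

theorem liminf_avg_interspersed_general (W : ℝ) (B : ℕ)
    (b : ℕ → ℝ) (hb : ∀ n, |b n| ≤ W) (w : ℝ)
    (hlim : Filter.liminf (fun n => (∑ k ∈ Finset.range n, b k) / n) atTop = w)
    (a : ℕ → ℝ) (l : ℕ → ℕ) (hl : ∀ i, l i ≤ B)
    (S : ℕ → ℕ) (hS0 : S 0 = 0) (hS : ∀ i, S (i + 1) = S i + l i + (i + 1))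
    (hjunk : ∀ i, ∀ t < l i, |a (S i + t)| ≤ W)
    (hmain : ∀ i, ∀ t < i + 1,
      a (S i + l i + t) = b ((∑ j ∈ Finset.range i, (j + 1)) + t)) :
    Filter.liminf (fun n => (∑ k ∈ Finset.range n, a k) / n) atTop =
        Filter.liminf (fun n => (∑ k ∈ Finset.range n, b k) / n) atTop ∧
      Filter.liminf (fun n => (∑ k ∈ Finset.range n, a k) / n) atTop = w := by
  have h : IsInterspersion a b l S := ⟨hS0, hS, hmain⟩
  have heq : liminf (cesaroAvg a) atTop = liminf (cesaroAvg b) atTop :=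
    le_antisymm (h.liminf_cesaroAvg_le hb hjunk hl) (h.le_liminf_cesaroAvg hb hjunk hl)
  exact ⟨heq, heq.trans hlim⟩

/-- interspersing bounded-length (≤ B) segments of numbers of
absolute value ≤ W between increasingly long (length i) consecutive segments of
a sequence b whose running averages have liminf w does not change the liminf of
the running averages: the resulting sequence a also has liminf of averages
equal to w. -/
theorem liminf_avg_interspersed (W : ℝ) (hW : 0 < W) (B : ℕ)
    (b : ℕ → ℝ) (hb : ∀ n, |b n| ≤ W) (w : ℝ)
    (hlim : Filter.liminf (fun n => (∑ k ∈ Finset.range n, b k) / n) atTop = w)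
    (a : ℕ → ℝ) (l : ℕ → ℕ) (hl : ∀ i, l i ≤ B)
    (S : ℕ → ℕ) (hS0 : S 0 = 0) (hS : ∀ i, S (i + 1) = S i + l i + (i + 1))
    (hjunk : ∀ i, ∀ t < l i, |a (S i + t)| ≤ W)
    (hmain : ∀ i, ∀ t < i + 1,
      a (S i + l i + t) = b ((∑ j ∈ Finset.range i, (j + 1)) + t)) :
    Filter.liminf (fun n => (∑ k ∈ Finset.range n, a k) / n) atTop =
        Filter.liminf (fun n => (∑ k ∈ Finset.range n, b k) / n) atTop ∧
      Filter.liminf (fun n => (∑ k ∈ Finset.range n, a k) / n) atTop = w :=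
  liminf_avg_interspersed_general W B b hb w hlim a l hl S hS0 hS hjunk hmain
end
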